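/- arXiv:2303.00335 — 11 statements merged into one kernel-verified Lean document; each statement's English description precedes it below -/
import Mathlib

section
/- With the hypotheses above, if q is a nonzero multiplicative quadratic form on (A,·), then s := q(b·a) is nonzero, and s·q(x*y) = q(x)q(y) holds for all x, y ∈ A; hence s⁻¹q is a nonzero multiplicative quadratic form on (A,*). -/
/-!
If right multiplication by `a` is onto, every value of `q` is a multiple of `q a`, so `q a ≠ 0`
as soon as `q ≠ 0`; likewise `q b ≠ 0`, whence `q (b a) = q b q a ≠ 0`. Writing `x = x' a` and
`y = b y'`, multiplicativity and commutativity of `F` give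
`q (b a) q (x' y') = (q x' q a)(q b q y') = q x q y`.
-/

section MultiplicativeMap

variable {A M : Type*} {mul : A → A → A} {q : A → M}

theorem ne_zero_of_surjective_mul_right [MulZeroClass M] (hq : ∀ x y, q (mul x y) = q x * q y)
    {w : A} (hw : q w ≠ 0) {a : A} (ha : Function.Surjective (mul · a)) : q a ≠ 0 := by
  obtain ⟨u, rfl⟩ := ha w
  intro h
  exact hw (by rw [hq, h, mul_zero])

theorem ne_zero_of_surjective_mul_left [MulZeroClass M] (hq : ∀ x y, q (mul x y) = q x * q y)
    {w : A} (hw : q w ≠ 0) {b : A} (hb : Function.Surjective (mul b)) : q b ≠ 0 := by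
  obtain ⟨u, rfl⟩ := hb w
  intro h
  exact hw (by rw [hq, h, zero_mul])

theorem map_mul_mul_map_mul_of_eq [CommMonoid M] (hq : ∀ x y, q (mul x y) = q x * q y)
    {a b x y x' y' : A} (hx : mul x' a = x) (hy : mul b y' = y) :
    q (mul b a) * q (mul x' y') = q x * q y := by
  subst hx hy
  simp only [hq]
  ac_rfl

end MultiplicativeMap

theorem inv_mul_eq_inv_mul_mul_inv_mul {K : Type*} [CommGroupWithZero K] {s u v w : K} (hs : s ≠ 0)
    (h : s * u = v * w) : s⁻¹ * u = s⁻¹ * v * (s⁻¹ * w) := by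
  calc s⁻¹ * u = s⁻¹ * s⁻¹ * (s * u) := by field_simp
    _ = s⁻¹ * v * (s⁻¹ * w) := by rw [h]; ac_rfl

/-- With the isotope multiplication `x * y = ρ_a⁻¹ x · λ_b⁻¹ y`, if `q` is a
nonzero multiplicative quadratic form on `(A,·)`, then `s := q(b·a)` is nonzero and
`s * q(x*y) = q x * q y` for all `x, y`; hence `s⁻¹ • q` is a nonzero multiplicative
quadratic form for `*`. -/
theorem stmt_1 (F : Type*) [Field F] (A : Type*) [AddCommGroup A] [Module F A]
    (mul : A →ₗ[F] A →ₗ[F] A)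
    (q : QuadraticForm F A)
    (hq : ∀ x y : A, q (mul x y) = q x * q y)
    (hq0 : q ≠ 0)
    (a b : A)
    (ha : Function.Bijective (fun x => mul x a))
    (hb : Function.Bijective (fun x => mul b x)) :
    q (mul b a) ≠ 0 ∧
    (∀ x y : A,
      q (mul b a) *
        q (mul (Function.invFun (fun z => mul z a) x)
            (Function.invFun (fun z => mul b z) y)) = q x * q y) ∧
    (q (mul b a))⁻¹ • q ≠ 0 ∧
    (∀ x y : A,
      ((q (mul b a))⁻¹ • q)
          (mul (Function.invFun (fun z => mul z a) x)
            (Function.invFun (fun z => mul b z) y)) =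
        ((q (mul b a))⁻¹ • q) x * ((q (mul b a))⁻¹ • q) y) := by
  obtain ⟨w, hw⟩ := DFunLike.ne_iff.mp hq0
  have hs : q (mul b a) ≠ 0 := by
    rw [hq]
    exact mul_ne_zero (ne_zero_of_surjective_mul_left hq hw hb.surjective)
      (ne_zero_of_surjective_mul_right hq hw ha.surjective)
  have key : ∀ x y : A,
      q (mul b a) *
        q (mul (Function.invFun (fun z => mul z a) x)
            (Function.invFun (fun z => mul b z) y)) = q x * q y := fun x y =>
    map_mul_mul_map_mul_of_eq hq (Function.rightInverse_invFun ha.surjective x)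
      (Function.rightInverse_invFun hb.surjective y)
  exact ⟨hs, key, smul_ne_zero (inv_ne_zero hs) hq0,
    fun x y => inv_mul_eq_inv_mul_mul_inv_mul hs (key x y)⟩
end

section
/- Let O be an octonion (8-dimensional composition) algebra over a field F of characteristic ≠ 2 that is a division algebra (i.e., the norm form is anisotropic). Then any two elements a, b ∈ O are contained in a common 4-dimensional subalgebra that is a quaternion algebra over F. -/
open QuadraticMap Submodule

set_option linter.unusedSectionVars false

section Oct

variable {F : Type*} [Field F] {O : Type*} [NonAssocRing O] [Module F O]
  [SMulCommClass F O O] [IsScalarTower F O O]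
  (q : QuadraticForm F O)

theorem oct_polar_expand (x y : O) : q (x + y) = q x + q y + polar ⇑q x y := by
  simp only [QuadraticMap.polar]; ring

variable (hmul : ∀ x y : O, q (x * y) = q x * q y)

include hmul

theorem bmul_r (x y z : O) : polar ⇑q (x * z) (y * z) = polar ⇑q x y * q z := by
  simp only [QuadraticMap.polar, ← add_mul, hmul]; ring

theorem bmul_l (x y z : O) : polar ⇑q (x * y) (x * z) = q x * polar ⇑q y z := by
  simp only [QuadraticMap.polar, ← mul_add, hmul]; ring

theorem bI3 (x y z w : O) :
    polar ⇑q (x * y) (z * w) + polar ⇑q (z * y) (x * w) = polar ⇑q x z * polar ⇑q y w := by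
  have h := bmul_l q hmul (x + z) y w
  rw [add_mul, add_mul, polar_add_left, polar_add_right, polar_add_right,
    oct_polar_expand] at h
  have h1 := bmul_l q hmul x y w
  have h2 := bmul_l q hmul z y w
  linear_combination h - h1 - h2

theorem bI4 (x y z w : O) :
    polar ⇑q (x * z) (y * w) + polar ⇑q (x * w) (y * z) = polar ⇑q x y * polar ⇑q z w := by
  have h := bmul_r q hmul x y (z + w)
  rw [mul_add, mul_add, polar_add_left, polar_add_right, polar_add_right,
    oct_polar_expand] at h
  have h1 := bmul_r q hmul x y z
  have h2 := bmul_r q hmul x y w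
  linear_combination h - h1 - h2

theorem adj_l (x y w : O) :
    polar ⇑q (x * y) w = polar ⇑q x 1 * polar ⇑q y w - polar ⇑q y (x * w) := by
  have h := bI3 q hmul x y 1 w
  rw [one_mul, one_mul] at h
  linear_combination h

variable (hnd : ∀ x : O, (∀ y : O, QuadraticMap.polar (⇑q) x y = 0) → x = 0)

include hnd

theorem sq_eq (x : O) : x * x = polar ⇑q x 1 • x - q x • (1 : O) := by
  rw [← sub_eq_zero]
  apply hnd
  intro w
  simp only [polar_sub_left, polar_smul_left, smul_eq_mul]
  have h1 := adj_l q hmul x x w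
  have h2 : polar ⇑q x (x * w) = q x * polar ⇑q 1 w := by
    have := bmul_l q hmul x 1 w; rwa [mul_one] at this
  linear_combination h1 - h2

theorem anticomm (x y : O) :
    x * y + y * x = polar ⇑q x 1 • y + polar ⇑q y 1 • x - polar ⇑q x y • (1 : O) := by
  rw [← sub_eq_zero]
  apply hnd
  intro w
  simp only [polar_sub_left, polar_add_left, polar_smul_left, smul_eq_mul]
  have h1 := adj_l q hmul x y w
  have h2 := adj_l q hmul y x w
  have h3 := bI4 q hmul x y 1 w
  rw [mul_one, mul_one, polar_comm (⇑q) (x * w) y] at h3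
  linear_combination h1 + h2 - h3

theorem lalt (x y : O) : x * (x * y) = polar ⇑q x 1 • (x * y) - q x • y := by
  rw [← sub_eq_zero]
  apply hnd
  intro w
  simp only [polar_sub_left, polar_smul_left, smul_eq_mul]
  have h1 := adj_l q hmul x (x * y) w
  have h2 := bmul_l q hmul x y w
  linear_combination h1 - h2

theorem ralt (x y : O) : (y * x) * x = polar ⇑q x 1 • (y * x) - q x • y := by
  rw [← sub_eq_zero]
  apply hnd
  intro w
  simp only [polar_sub_left, polar_smul_left, smul_eq_mul]
  -- adj_r instance : polar ((y*x)*x) w = polar (y*x) w * polar x 1 - polar (y*x) (w*x)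
  have h1 := bI4 q hmul (y * x) w x 1
  rw [mul_one, mul_one] at h1
  have h2 := bmul_r q hmul y w x
  linear_combination h1 - h2

omit hmul hnd in
theorem spanClosed (s : Set O) (h : ∀ x ∈ s, ∀ y ∈ s, x * y ∈ span F s) :
    ∀ x ∈ span F s, ∀ y ∈ span F s, x * y ∈ span F s := by
  intro x hx y hy
  induction hx, hy using Submodule.span_induction₂ with
  | mem_mem u v hu hv => exact h u hu v hv
  | zero_left v hv => rw [zero_mul]; exact zero_mem _
  | zero_right u hu => rw [mul_zero]; exact zero_mem _
  | add_left u v z hu hv hz h1 h2 => rw [add_mul]; exact add_mem h1 h2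
  | add_right u v z hu hv hz h1 h2 => rw [mul_add]; exact add_mem h1 h2
  | smul_left r u v hu hv h1 => rw [smul_mul_assoc]; exact smul_mem _ _ h1
  | smul_right r u v hu hv h1 => rw [mul_smul_comm]; exact smul_mem _ _ h1

theorem Kclosed (c : O) :
    ∀ x ∈ span F {(1 : O), c}, ∀ y ∈ span F {(1 : O), c}, x * y ∈ span F {(1 : O), c} := by
  apply spanClosed
  intro x hx y hy
  have m1 : (1 : O) ∈ span F {(1 : O), c} := subset_span (Set.mem_insert _ _)
  have mc : c ∈ span F {(1 : O), c} := subset_span (Set.mem_insert_of_mem _ rfl)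
  simp only [Set.mem_insert_iff, Set.mem_singleton_iff] at hx hy
  rcases hx with rfl | rfl <;> rcases hy with rfl | rfl
  · rw [one_mul]; exact m1
  · rw [one_mul]; exact mc
  · rw [mul_one]; exact mc
  · rw [sq_eq q hmul hnd]
    exact sub_mem (smul_mem _ _ mc) (smul_mem _ _ m1)


include hnd

theorem quatMain (c d : O) (hli : LinearIndependent F ![1, c, d, c * d]) :
    (∀ x ∈ span F {(1 : O), c, d, c * d}, ∀ y ∈ span F {(1 : O), c, d, c * d},
        x * y ∈ span F {(1 : O), c, d, c * d}) ∧
    Module.finrank F (span F {(1 : O), c, d, c * d}) = 4 := by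
  constructor
  · apply spanClosed
    intro x hx y hy
    have m1 : (1 : O) ∈ span F {(1 : O), c, d, c * d} := subset_span (by simp)
    have mc : c ∈ span F {(1 : O), c, d, c * d} := subset_span (by simp)
    have md : d ∈ span F {(1 : O), c, d, c * d} := subset_span (by simp)
    have mcd : c * d ∈ span F {(1 : O), c, d, c * d} := subset_span (by simp)
    have sqmem : ∀ z ∈ span F {(1 : O), c, d, c * d}, z * z ∈ span F {(1 : O), c, d, c * d} := by
      intro z hz
      rw [sq_eq q hmul hnd]
      exact sub_mem (smul_mem _ _ hz) (smul_mem _ _ m1)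
    have hlal : c * (c * d) ∈ span F {(1 : O), c, d, c * d} := by
      rw [lalt q hmul hnd]
      exact sub_mem (smul_mem _ _ mcd) (smul_mem _ _ md)
    have hral : (c * d) * d ∈ span F {(1 : O), c, d, c * d} := by
      rw [ralt q hmul hnd]
      exact sub_mem (smul_mem _ _ mcd) (smul_mem _ _ mc)
    have hflip : ∀ u v : O, u ∈ span F {(1 : O), c, d, c * d} →
        v ∈ span F {(1 : O), c, d, c * d} → u * v ∈ span F {(1 : O), c, d, c * d} →
        v * u ∈ span F {(1 : O), c, d, c * d} := by
      intro u v hu hv huv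
      have h := anticomm q hmul hnd u v
      have h2 : v * u =
          (polar ⇑q u 1 • v + polar ⇑q v 1 • u - polar ⇑q u v • (1 : O)) - u * v :=
        eq_sub_of_add_eq' h
      rw [h2]
      exact sub_mem (sub_mem (add_mem (smul_mem _ _ hv) (smul_mem _ _ hu))
        (smul_mem _ _ m1)) huv
    simp only [Set.mem_insert_iff, Set.mem_singleton_iff] at hx hy
    rcases hx with rfl | rfl | rfl | rfl <;> rcases hy with rfl | rfl | rfl | rfl
    · rw [one_mul]; exact m1
    · rw [one_mul]; exact mc
    · rw [one_mul]; exact md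
    · rw [one_mul]; exact mcd
    · rw [mul_one]; exact mc
    · exact sqmem _ mc
    · exact mcd
    · exact hlal
    · rw [mul_one]; exact md
    · exact hflip _ _ mc md mcd
    · exact sqmem _ md
    · exact hflip _ _ mcd md hral
    · rw [mul_one]; exact mcd
    · exact hflip _ _ mc mcd hlal
    · exact hral
    · exact sqmem _ mcd
  · have hr : ({(1 : O), c, d, c * d} : Set O) = Set.range ![1, c, d, c * d] := by
      ext z
      simp only [Set.mem_insert_iff, Set.mem_singleton_iff, Set.mem_range]
      constructor
      · rintro (rfl | rfl | rfl | rfl)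
        exacts [⟨0, by simp⟩, ⟨1, by simp⟩, ⟨2, by simp⟩, ⟨3, by simp⟩]
      · rintro ⟨i, rfl⟩
        fin_cases i <;> simp
    rw [hr, finrank_span_eq_card hli]
    simp

theorem indepCons (haniso : ∀ x : O, q x = 0 → x = 0) (hchar : (2 : F) ≠ 0)
    (h10 : (1 : O) ≠ 0) (c d : O)
    (hc : ∀ α : F, c ≠ α • (1 : O)) (hd0 : d ≠ 0)
    (hd1 : polar ⇑q d 1 = 0) (hdc : polar ⇑q d c = 0) :
    LinearIndependent F ![1, c, d, c * d] := by
  have m1 : (1 : O) ∈ span F {(1 : O), c} := subset_span (by simp)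
  have mc : c ∈ span F {(1 : O), c} := subset_span (by simp)
  have indep2 : ∀ s t : F, s • (1 : O) + t • c = 0 → s = 0 ∧ t = 0 := by
    intro s t hst
    by_cases ht : t = 0
    · subst ht
      rw [zero_smul, add_zero] at hst
      rcases smul_eq_zero.1 hst with h | h
      exacts [⟨h, rfl⟩, absurd h h10]
    · exfalso
      apply hc (-s / t)
      have h1 : t • c = (-s) • (1 : O) := by
        linear_combination (norm := module) hst
      calc c = t⁻¹ • (t • c) := by rw [smul_smul, inv_mul_cancel₀ ht, one_smul]
        _ = (-s / t) • (1 : O) := by rw [h1, smul_smul]; congr 1; ring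
  have hdK : ∀ k ∈ span F {(1 : O), c}, polar ⇑q d k = 0 := by
    intro k hk
    induction hk using span_induction with
    | mem z hz =>
      simp only [Set.mem_insert_iff, Set.mem_singleton_iff] at hz
      rcases hz with rfl | rfl
      exacts [hd1, hdc]
    | zero => exact polar_zero_right _ _
    | add x y hx hy h1 h2 => rw [polar_add_right, h1, h2, add_zero]
    | smul a x hx h1 => rw [polar_smul_right, h1, smul_zero]
  rw [Fintype.linearIndependent_iff]
  intro g hg
  rw [Fin.sum_univ_four] at hg
  simp only [Matrix.cons_val_zero, Matrix.cons_val_one, Matrix.head_cons] at hg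
  have hg' : g 0 • (1 : O) + g 1 • c + g 2 • d + g 3 • (c * d) = 0 := by
    convert hg using 3 <;> simp
  have hu : (g 0 • (1 : O) + g 1 • c) ∈ span F {(1 : O), c} :=
    add_mem (smul_mem _ _ m1) (smul_mem _ _ mc)
  have hv : (g 2 • (1 : O) + g 3 • c) ∈ span F {(1 : O), c} :=
    add_mem (smul_mem _ _ m1) (smul_mem _ _ mc)
  have hvd : (g 2 • (1 : O) + g 3 • c) * d = g 2 • d + g 3 • (c * d) := by
    rw [add_mul, smul_mul_assoc, smul_mul_assoc, one_mul]
  have huv : (g 0 • (1 : O) + g 1 • c) + (g 2 • (1 : O) + g 3 • c) * d = 0 := by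
    rw [hvd, ← hg']; module
  have hperp : polar ⇑q ((g 2 • (1 : O) + g 3 • c) * d) (g 0 • (1 : O) + g 1 • c) = 0 := by
    have h := adj_l q hmul (g 2 • (1 : O) + g 3 • c) d (g 0 • (1 : O) + g 1 • c)
    rw [hdK _ hu, hdK _ (Kclosed q hmul hnd c _ hv _ hu), mul_zero, sub_zero] at h
    exact h
  have h0 : polar ⇑q ((g 0 • (1 : O) + g 1 • c) + (g 2 • (1 : O) + g 3 • c) * d)
      (g 0 • (1 : O) + g 1 • c) = 0 := by
    rw [huv]; exact polar_zero_left _ _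
  rw [polar_add_left, hperp, add_zero] at h0
  rw [polar_self, nsmul_eq_mul, Nat.cast_ofNat] at h0
  have hqu : q (g 0 • (1 : O) + g 1 • c) = 0 := (mul_eq_zero.1 h0).resolve_left hchar
  have hu0 : (g 0 • (1 : O) + g 1 • c) = 0 := haniso _ hqu
  have hvd0 : (g 2 • (1 : O) + g 3 • c) * d = 0 := by
    rw [hu0, zero_add] at huv; exact huv
  have hqv : q (g 2 • (1 : O) + g 3 • c) = 0 := by
    have h := hmul (g 2 • (1 : O) + g 3 • c) d
    rw [hvd0, QuadraticMap.map_zero] at h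
    have hqd : q d ≠ 0 := fun hh => hd0 (haniso d hh)
    rcases mul_eq_zero.1 h.symm with h' | h'
    exacts [h', absurd h' hqd]
  have hv0 : (g 2 • (1 : O) + g 3 • c) = 0 := haniso _ hqv
  obtain ⟨e0, e1⟩ := indep2 _ _ hu0
  obtain ⟨e2, e3⟩ := indep2 _ _ hv0
  intro i
  fin_cases i <;> assumption

end Oct


/-- In a non-split (division) octonion algebra over a field of
characteristic ≠ 2, any two elements lie in a common quaternion subalgebra:
a 4-dimensional subalgebra containing 1 on which the polar form is nondegenerate. -/
theorem stmt_3 (F : Type*) [Field F] (O : Type*) [NonAssocRing O] [Module F O]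
    [SMulCommClass F O O] [IsScalarTower F O O]
    (q : QuadraticForm F O)
    (hmul : ∀ x y : O, q (x * y) = q x * q y)
    (hnd : ∀ x : O, (∀ y : O, QuadraticMap.polar (⇑q) x y = 0) → x = 0)
    (hdim : Module.finrank F O = 8)
    (hchar : (2 : F) ≠ 0)
    (haniso : ∀ x : O, q x = 0 → x = 0)
    (a b : O) :
    ∃ S : Submodule F O,
      a ∈ S ∧ b ∈ S ∧ (1 : O) ∈ S ∧
      (∀ x ∈ S, ∀ y ∈ S, x * y ∈ S) ∧
      Module.finrank F S = 4 ∧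
      (∀ x ∈ S, (∀ y ∈ S, QuadraticMap.polar (⇑q) x y = 0) → x = 0) := by
  have hfin : FiniteDimensional F O := FiniteDimensional.of_finrank_pos (by rw [hdim]; norm_num)
  have hnt : Nontrivial O := Module.nontrivial_of_finrank_pos (R := F) (by rw [hdim]; norm_num)
  have h10 : (1 : O) ≠ 0 := one_ne_zero
  have nondeg : ∀ (S : Submodule F O), ∀ x ∈ S, (∀ y ∈ S, polar ⇑q x y = 0) → x = 0 := by
    intro S x hx h
    have h0 := h x hx
    rw [polar_self, nsmul_eq_mul, Nat.cast_ofNat] at h0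
    exact haniso x ((mul_eq_zero.1 h0).resolve_left hchar)
  have hcommon : (∃ c : O, a ∈ span F {(1 : O), c} ∧ b ∈ span F {(1 : O), c}) ∨
      LinearIndependent F ![1, a, b, a * b] := by
    by_cases hli : LinearIndependent F ![1, a, b, a * b]
    · exact Or.inr hli
    left
    rw [Fintype.not_linearIndependent_iff] at hli
    obtain ⟨g, hg, i, hgi⟩ := hli
    rw [Fin.sum_univ_four] at hg
    simp only [Matrix.cons_val_zero, Matrix.cons_val_one, Matrix.head_cons] at hg
    have hg' : g 0 • (1 : O) + g 1 • a + g 2 • b + g 3 • (a * b) = 0 := by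
      convert hg using 3 <;> simp
    by_cases h3 : g 3 = 0
    · rw [h3, zero_smul, add_zero] at hg'
      by_cases h2 : g 2 = 0
      · rw [h2, zero_smul, add_zero] at hg'
        by_cases h1 : g 1 = 0
        · rw [h1, zero_smul, add_zero] at hg'
          exfalso
          have hg0 : g 0 = 0 := by
            rcases smul_eq_zero.1 hg' with h | h
            exacts [h, absurd h h10]
          fin_cases i
          · exact hgi hg0
          · exact hgi h1
          · exact hgi h2
          · exact hgi h3
        · -- a is a scalar multiple of 1
          refine ⟨b, ?_, subset_span (by simp)⟩
          have ha : a = ((-(g 0)) / g 1) • (1 : O) := by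
            have hh : g 1 • a = (-(g 0)) • (1 : O) := by
              linear_combination (norm := module) hg'
            calc a = (g 1)⁻¹ • (g 1 • a) := by
                  rw [smul_smul, inv_mul_cancel₀ h1, one_smul]
              _ = ((-(g 0)) / g 1) • (1 : O) := by rw [hh, smul_smul]; congr 1; ring
          rw [ha]
          exact smul_mem _ _ (subset_span (by simp))
      · -- b in span {1, a}
        refine ⟨a, subset_span (by simp), ?_⟩
        have hh : g 2 • b = (-(g 0)) • (1 : O) + (-(g 1)) • a := by
          linear_combination (norm := module) hg'
        have hb : b = (g 2)⁻¹ • ((-(g 0)) • (1 : O) + (-(g 1)) • a) := by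
          rw [← hh, smul_smul, inv_mul_cancel₀ h2, one_smul]
        rw [hb]
        exact smul_mem _ _ (add_mem (smul_mem _ _ (subset_span (by simp)))
          (smul_mem _ _ (subset_span (by simp))))
    · -- g 3 ≠ 0 : a*b ∈ span {1, a, b}
      have hxb : (g 3 • a + g 2 • (1 : O)) * b = (-(g 0)) • (1 : O) + (-(g 1)) • a := by
        rw [add_mul, smul_mul_assoc, smul_mul_assoc, one_mul]
        linear_combination (norm := module) hg'
      by_cases hx0 : g 3 • a + g 2 • (1 : O) = 0
      · -- a is a scalar
        refine ⟨b, ?_, subset_span (by simp)⟩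
        have ha : a = ((-(g 2)) / g 3) • (1 : O) := by
          have hh : g 3 • a = (-(g 2)) • (1 : O) := by
            linear_combination (norm := module) hx0
          calc a = (g 3)⁻¹ • (g 3 • a) := by
                rw [smul_smul, inv_mul_cancel₀ h3, one_smul]
            _ = ((-(g 2)) / g 3) • (1 : O) := by rw [hh, smul_smul]; congr 1; ring
        rw [ha]
        exact smul_mem _ _ (subset_span (by simp))
      · refine ⟨a, subset_span (by simp), ?_⟩
        have hqx : q (g 3 • a + g 2 • (1 : O)) ≠ 0 := fun hh => hx0 (haniso _ hh)
        have hI5 : (polar ⇑q (g 3 • a + g 2 • (1 : O)) 1 • (1 : O) - (g 3 • a + g 2 • (1 : O))) *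
            ((g 3 • a + g 2 • (1 : O)) * b) = q (g 3 • a + g 2 • (1 : O)) • b := by
          rw [sub_mul, smul_mul_assoc, one_mul, lalt q hmul hnd]
          module
        have hb : b = (q (g 3 • a + g 2 • (1 : O)))⁻¹ •
            ((polar ⇑q (g 3 • a + g 2 • (1 : O)) 1 • (1 : O) - (g 3 • a + g 2 • (1 : O))) *
              ((g 3 • a + g 2 • (1 : O)) * b)) := by
          rw [hI5, smul_smul, inv_mul_cancel₀ hqx, one_smul]
        rw [hb]
        apply smul_mem
        apply Kclosed q hmul hnd a
        · exact sub_mem (smul_mem _ _ (subset_span (by simp)))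
            (add_mem (smul_mem _ _ (subset_span (by simp)))
              (smul_mem _ _ (subset_span (by simp))))
        · rw [hxb]
          exact add_mem (smul_mem _ _ (subset_span (by simp)))
            (smul_mem _ _ (subset_span (by simp)))
  rcases hcommon with ⟨c, ha, hb⟩ | hli
  · -- find c' with c' ∉ F·1 and a, b ∈ span {1, c'}
    have hex : ∃ e : O, e ∉ span F {(1 : O)} := by
      by_contra hcon
      push_neg at hcon
      have htop : span F {(1 : O)} = ⊤ := eq_top_iff.2 fun z _ => hcon z
      have h1 : Module.finrank F (⊤ : Submodule F O) = Module.finrank F O := finrank_top F O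
      rw [← htop, finrank_span_singleton h10, hdim] at h1
      norm_num at h1
    obtain ⟨c', hc', ha', hb'⟩ : ∃ c' : O, c' ∉ span F {(1 : O)} ∧
        a ∈ span F {(1 : O), c'} ∧ b ∈ span F {(1 : O), c'} := by
      by_cases hc : c ∈ span F {(1 : O)}
      · obtain ⟨e, he⟩ := hex
        have hle : span F {(1 : O), c} ≤ span F {(1 : O), e} := by
          rw [span_le]
          rintro z (rfl | rfl)
          · exact subset_span (by simp)
          · exact span_mono (by simp) hc
        exact ⟨e, he, hle ha, hle hb⟩
      · exact ⟨c, hc, ha, hb⟩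
    have hcnot : ∀ α : F, c' ≠ α • (1 : O) := by
      intro α h
      exact hc' (by rw [h]; exact smul_mem _ _ (subset_span rfl))
    -- find d ⊥ {1, c'}
    obtain ⟨d, hdker, hd0⟩ : ∃ d ∈ LinearMap.ker
        ((QuadraticMap.polarBilin q 1).prod (QuadraticMap.polarBilin q c')), d ≠ (0 : O) := by
      rw [← Submodule.ne_bot_iff]
      intro hbot
      have hrank := LinearMap.finrank_range_add_finrank_ker
        ((QuadraticMap.polarBilin q 1).prod (QuadraticMap.polarBilin q c'))
      rw [hbot, finrank_bot, add_zero, hdim] at hrank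
      have hle := Submodule.finrank_le
        (LinearMap.range ((QuadraticMap.polarBilin q 1).prod (QuadraticMap.polarBilin q c')))
      rw [Module.finrank_prod, Module.finrank_self] at hle
      omega
    have hker := LinearMap.mem_ker.1 hdker
    rw [LinearMap.prod_apply] at hker
    have hd1 : polar ⇑q d 1 = 0 := by
      have := congrArg Prod.fst hker
      simpa [polar_comm (⇑q) d 1] using this
    have hdc : polar ⇑q d c' = 0 := by
      have := congrArg Prod.snd hker
      simpa [polar_comm (⇑q) d c'] using this
    have hli := indepCons q hmul hnd haniso hchar h10 c' d hcnot hd0 hd1 hdc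
    obtain ⟨hclosed, hrank4⟩ := quatMain q hmul hnd c' d hli
    have hsub : span F {(1 : O), c'} ≤ span F {(1 : O), c', d, c' * d} :=
      span_mono (by intro z hz; simp only [Set.mem_insert_iff, Set.mem_singleton_iff] at hz ⊢; tauto)
    exact ⟨span F {(1 : O), c', d, c' * d}, hsub ha', hsub hb', subset_span (by simp),
      hclosed, hrank4, nondeg _⟩
  · obtain ⟨hclosed, hrank4⟩ := quatMain q hmul hnd a b hli
    exact ⟨span F {(1 : O), a, b, a * b}, subset_span (by simp), subset_span (by simp),
      subset_span (by simp), hclosed, hrank4, nondeg _⟩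
end

section
/- In the split octonion algebra O = F^{2×2} ⊕ F^{2×2}w with multiplication (a+xw)(b+yw) = ab + ȳx + (ya + x b̄)w, let n₀ = E₁₂ and p₀ = E₁₁ (matrix units). Then the 4-dimensional subspace n₀O is a subalgebra of O that is not associative: specifically, p₀((p̄₀w)(n₀w)) = −n₀ while (p₀(p̄₀w))(n₀w) = 0. -/
open Matrix

/-- The quaternion conjugate on `F^{2×2}`. -/
noncomputable def quatConj {F : Type*} [Field F] (x : Matrix (Fin 2) (Fin 2) F) :
    Matrix (Fin 2) (Fin 2) F :=
  Matrix.trace x • (1 : Matrix (Fin 2) (Fin 2) F) - x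

/-- The split octonion multiplication on `F^{2×2} × F^{2×2}`,
`(a+xw)(b+yw) = ab + ȳx + (ya + x b̄)w` (doubling with `w² = 1`). -/
noncomputable def omul {F : Type*} [Field F]
    (p q : Matrix (Fin 2) (Fin 2) F × Matrix (Fin 2) (Fin 2) F) :
    Matrix (Fin 2) (Fin 2) F × Matrix (Fin 2) (Fin 2) F :=
  (p.1 * q.1 + quatConj q.2 * p.2, q.2 * p.1 + p.2 * quatConj q.1)

/-!
Left multiplication by `n₀ = E₁₂` is `(b, y) ↦ (n₀ b, y n₀)`, so `n₀O` consists of the pairs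
`(a, x)` with `a` supported on the first row and `x` on the second column. With `u` the first
row of `a` and `v` the second column of `x` as coordinates, the octonion product becomes
`(u, v) (u', v') = ((u₀u'₀, u₀u'₁ + v₀v'₁ - v₁v'₀), u'₀ v)`, which is visibly closed.
In these coordinates `p₀ = (e₀, 0)`, `p̄₀w = (0, e₁)`, `n₀w = (0, e₀)`, and the two bracketings
of their product are `(-e₁, 0) = -n₀` and `0`.
-/

section

variable {F : Type*} [Field F]

variable (F) in
noncomputable def embedRowCol :
    ((Fin 2 → F) × (Fin 2 → F)) →ₗ[F] Matrix (Fin 2) (Fin 2) F × Matrix (Fin 2) (Fin 2) F where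
  toFun p := (Matrix.of fun i j => if i = 0 then p.1 j else 0,
              Matrix.of fun i j => if j = 1 then p.2 i else 0)
  map_add' p q := by ext <;> simp [ite_add_zero]
  map_smul' c p := by ext <;> simp

theorem embedRowCol_injective : Function.Injective (embedRowCol F) := by
  rintro ⟨u, v⟩ ⟨u', v'⟩ h
  have hu := congrArg (fun z => z.1 0) h
  have hv := congrArg (fun z i => z.2 i 1) h
  simp only [embedRowCol, LinearMap.coe_mk, AddHom.coe_mk, of_apply, if_true] at hu hv
  exact Prod.ext (funext (congrFun hu)) (funext (congrFun hv))

theorem finrank_range_embedRowCol : Module.finrank F (LinearMap.range (embedRowCol F)) = 4 := by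
  rw [LinearMap.finrank_range_of_inj embedRowCol_injective]
  simp [Module.finrank_prod]

theorem omul_single_zero_one_left (b y : Matrix (Fin 2) (Fin 2) F) :
    omul (single 0 1 1, 0) (b, y) = embedRowCol F (b 1, fun i => y i 0) := by
  refine Prod.ext ?_ ?_ <;> ext i j <;> fin_cases i <;> fin_cases j <;>
    simp [omul, quatConj, embedRowCol, mul_apply, single]

theorem embedRowCol_eq_omul (u v : Fin 2 → F) :
    embedRowCol F (u, v) =
      omul (single 0 1 1, 0) (Matrix.of (Pi.single 1 u), Matrix.of fun i => Pi.single 0 (v i)) := by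
  rw [omul_single_zero_one_left]
  congr

theorem range_omul_single_zero_one_left :
    Set.range (omul ((single 0 1 1 : Matrix (Fin 2) (Fin 2) F), 0)) =
      Set.range (embedRowCol F) :=
  Set.Subset.antisymm
    (Set.range_subset_iff.2 fun ⟨b, y⟩ => ⟨_, (omul_single_zero_one_left b y).symm⟩)
    (Set.range_subset_iff.2 fun ⟨u, v⟩ => ⟨_, (embedRowCol_eq_omul u v).symm⟩)

theorem omul_embedRowCol (u v u' v' : Fin 2 → F) :
    omul (embedRowCol F (u, v)) (embedRowCol F (u', v')) =
      embedRowCol F (![u 0 * u' 0, u 0 * u' 1 + v 0 * v' 1 - v 1 * v' 0], u' 0 • v) := by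
  refine Prod.ext ?_ ?_ <;> ext i j <;> fin_cases i <;> fin_cases j <;>
    simp [omul, quatConj, embedRowCol, mul_apply, Fin.sum_univ_two, trace_fin_two] <;> ring

theorem omul_mem_range_embedRowCol {z z' : Matrix (Fin 2) (Fin 2) F × Matrix (Fin 2) (Fin 2) F}
    (hz : z ∈ LinearMap.range (embedRowCol F)) (hz' : z' ∈ LinearMap.range (embedRowCol F)) :
    omul z z' ∈ LinearMap.range (embedRowCol F) := by
  obtain ⟨⟨u, v⟩, rfl⟩ := hz
  obtain ⟨⟨u', v'⟩, rfl⟩ := hz'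
  exact ⟨_, (omul_embedRowCol u v u' v').symm⟩

theorem single_zero_zero_mem_range_embedRowCol :
    ((single 0 0 1 : Matrix (Fin 2) (Fin 2) F), 0) ∈ LinearMap.range (embedRowCol F) :=
  ⟨(Pi.single 0 1, 0), by
    refine Prod.ext ?_ ?_ <;> ext i j <;> fin_cases i <;> fin_cases j <;> simp [embedRowCol]⟩

theorem quatConj_single_zero_zero_mem_range_embedRowCol :
    ((0 : Matrix (Fin 2) (Fin 2) F), quatConj (single 0 0 1)) ∈ LinearMap.range (embedRowCol F) :=
  ⟨(0, Pi.single 1 1), by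
    refine Prod.ext ?_ ?_ <;> ext i j <;> fin_cases i <;> fin_cases j <;>
      simp [embedRowCol, quatConj]⟩

theorem single_zero_one_mem_range_embedRowCol :
    ((0 : Matrix (Fin 2) (Fin 2) F), single 0 1 1) ∈ LinearMap.range (embedRowCol F) :=
  ⟨(0, Pi.single 0 1), by
    refine Prod.ext ?_ ?_ <;> ext i j <;> fin_cases i <;> fin_cases j <;> simp [embedRowCol]⟩

theorem omul_single_omul_quatConj_single :
    omul (single 0 0 1, 0) (omul (0, quatConj (single 0 0 1)) (0, single 0 1 1)) =
      (-(single 0 1 1 : Matrix (Fin 2) (Fin 2) F), 0) := by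
  refine Prod.ext ?_ ?_ <;> ext i j <;> fin_cases i <;> fin_cases j <;>
    simp [omul, quatConj, mul_apply, single, trace_fin_two]

theorem omul_omul_single_quatConj_single :
    omul (omul (single 0 0 1, 0) (0, quatConj (single 0 0 1))) (0, single 0 1 1) =
      (0 : Matrix (Fin 2) (Fin 2) F × Matrix (Fin 2) (Fin 2) F) := by
  refine Prod.ext ?_ ?_ <;> ext i j <;> fin_cases i <;> fin_cases j <;>
    simp [omul, quatConj, mul_apply, single, trace_fin_two]

end

/-- With `n₀ = E₁₂` and `p₀ = E₁₁`, the 4-dimensional subspace `n₀O`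
is a subalgebra of the split octonion algebra which is not associative; specifically
`p₀((p̄₀w)(n₀w)) = -n₀` while `(p₀(p̄₀w))(n₀w) = 0`. -/
theorem stmt_5 (F : Type*) [Field F]
    (n₀ p₀ : Matrix (Fin 2) (Fin 2) F)
    (hn : n₀ = Matrix.single 0 1 1)
    (hp : p₀ = Matrix.single 0 0 1)
    (S : Submodule F (Matrix (Fin 2) (Fin 2) F × Matrix (Fin 2) (Fin 2) F))
    (hS : (S : Set (Matrix (Fin 2) (Fin 2) F × Matrix (Fin 2) (Fin 2) F)) =
      Set.range (fun z => omul (n₀, 0) z)) :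
    (∀ u ∈ S, ∀ v ∈ S, omul u v ∈ S) ∧
    Module.finrank F S = 4 ∧
    omul (p₀, 0) (omul (0, quatConj p₀) (0, n₀)) = (-n₀, 0) ∧
    omul (omul (p₀, 0) (0, quatConj p₀)) (0, n₀) = 0 ∧
    ¬ (∀ u ∈ S, ∀ v ∈ S, ∀ w ∈ S, omul (omul u v) w = omul u (omul v w)) := by
  subst hn hp
  obtain rfl : S = LinearMap.range (embedRowCol F) :=
    SetLike.coe_injective (hS.trans range_omul_single_zero_one_left)
  refine ⟨fun u hu v hv => omul_mem_range_embedRowCol hu hv, finrank_range_embedRowCol,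
    omul_single_omul_quatConj_single, omul_omul_single_quatConj_single, fun hassoc => ?_⟩
  have h := hassoc _ single_zero_zero_mem_range_embedRowCol
    _ quatConj_single_zero_zero_mem_range_embedRowCol _ single_zero_one_mem_range_embedRowCol
  rw [omul_single_omul_quatConj_single, omul_omul_single_quatConj_single] at h
  simpa using congrArg (fun z => z.1 0 1) h
end

section
/- Let O be an octonion algebra over F and let A be the subalgebra generated by two elements x, y ∈ O. Then A is contained in the span of {1, x, y, xy}; in particular dim A ≤ 4. -/
section OctonionAux

variable {F : Type*} [Field F] {O : Type*} [NonAssocRing O] [Module F O]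
  [SMulCommClass F O O] [IsScalarTower F O O]

private theorem oct_B1 (q : QuadraticForm F O) (hmul : ∀ x y : O, q (x * y) = q x * q y)
    (a c b : O) :
    QuadraticMap.polar (⇑q) (a * b) (c * b) = QuadraticMap.polar (⇑q) a c * q b := by
  simp only [QuadraticMap.polar, ← add_mul, hmul]
  ring

private theorem oct_B1' (q : QuadraticForm F O) (hmul : ∀ x y : O, q (x * y) = q x * q y)
    (a b d : O) :
    QuadraticMap.polar (⇑q) (a * b) (a * d) = q a * QuadraticMap.polar (⇑q) b d := by
  simp only [QuadraticMap.polar, ← mul_add, hmul]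
  ring

private theorem oct_B2 (q : QuadraticForm F O) (hmul : ∀ x y : O, q (x * y) = q x * q y)
    (a c b d : O) :
    QuadraticMap.polar (⇑q) (a * b) (c * d) + QuadraticMap.polar (⇑q) (a * d) (c * b)
      = QuadraticMap.polar (⇑q) a c * QuadraticMap.polar (⇑q) b d := by
  have h := oct_B1 q hmul a c (b + d)
  have hq : q (b + d) = q b + q d + QuadraticMap.polar (⇑q) b d :=
    QuadraticMap.map_add (⇑q) b d
  rw [mul_add, mul_add, QuadraticMap.polar_add_left, QuadraticMap.polar_add_right,
    QuadraticMap.polar_add_right, hq] at h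
  have h1 := oct_B1 q hmul a c b
  have h2 := oct_B1 q hmul a c d
  linear_combination h - h1 - h2

/-- `P (c*b) d = T c * P b d - P b (c*d)` where `T c = P c 1`. -/
private theorem oct_B3 (q : QuadraticForm F O) (hmul : ∀ x y : O, q (x * y) = q x * q y)
    (c b d : O) :
    QuadraticMap.polar (⇑q) (c * b) d
      = QuadraticMap.polar (⇑q) c 1 * QuadraticMap.polar (⇑q) b d
        - QuadraticMap.polar (⇑q) b (c * d) := by
  have h := oct_B2 q hmul 1 c b d
  rw [one_mul, one_mul] at h
  have hc : QuadraticMap.polar (⇑q) 1 c = QuadraticMap.polar (⇑q) c 1 :=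
    QuadraticMap.polar_comm (⇑q) 1 c
  have hcomm : QuadraticMap.polar (⇑q) (c * b) d = QuadraticMap.polar (⇑q) d (c * b) :=
    QuadraticMap.polar_comm (⇑q) _ _
  rw [hc] at h
  linear_combination hcomm + h

/-- `P (a*b) c = P a c * T b - P a (c*b)`. -/
private theorem oct_B4 (q : QuadraticForm F O) (hmul : ∀ x y : O, q (x * y) = q x * q y)
    (a b c : O) :
    QuadraticMap.polar (⇑q) (a * b) c
      = QuadraticMap.polar (⇑q) a c * QuadraticMap.polar (⇑q) b 1
        - QuadraticMap.polar (⇑q) a (c * b) := by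
  have h := oct_B2 q hmul a c b 1
  rw [mul_one, mul_one] at h
  linear_combination h

/-- Left Kirmse identity: `a * (a * b) = T a • (a * b) - q a • b`. -/
private theorem oct_KL (q : QuadraticForm F O) (hmul : ∀ x y : O, q (x * y) = q x * q y)
    (hnd : ∀ x : O, (∀ y : O, QuadraticMap.polar (⇑q) x y = 0) → x = 0) (a b : O) :
    a * (a * b) = QuadraticMap.polar (⇑q) a 1 • (a * b) - q a • b := by
  rw [← sub_eq_zero]
  apply hnd
  intro c
  rw [QuadraticMap.polar_sub_left, QuadraticMap.polar_sub_left,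
    QuadraticMap.polar_smul_left, QuadraticMap.polar_smul_left, smul_eq_mul, smul_eq_mul]
  have h3 := oct_B3 q hmul a (a * b) c
  have h1' := oct_B1' q hmul a b c
  linear_combination h3 - h1'

/-- Right Kirmse identity: `(a * b) * b = T b • (a * b) - q b • a`. -/
private theorem oct_KR (q : QuadraticForm F O) (hmul : ∀ x y : O, q (x * y) = q x * q y)
    (hnd : ∀ x : O, (∀ y : O, QuadraticMap.polar (⇑q) x y = 0) → x = 0) (a b : O) :
    (a * b) * b = QuadraticMap.polar (⇑q) b 1 • (a * b) - q b • a := by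
  rw [← sub_eq_zero]
  apply hnd
  intro c
  rw [QuadraticMap.polar_sub_left, QuadraticMap.polar_sub_left,
    QuadraticMap.polar_smul_left, QuadraticMap.polar_smul_left, smul_eq_mul, smul_eq_mul]
  have h4 := oct_B4 q hmul (a * b) b c
  have h1 := oct_B1 q hmul a c b
  have hac : QuadraticMap.polar (⇑q) a c = QuadraticMap.polar (⇑q) c a :=
    QuadraticMap.polar_comm (⇑q) a c
  linear_combination h4 - h1

/-- Cayley–Hamilton relation: `a * a = T a • a - q a • 1`. -/
private theorem oct_SQ (q : QuadraticForm F O) (hmul : ∀ x y : O, q (x * y) = q x * q y)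
    (hnd : ∀ x : O, (∀ y : O, QuadraticMap.polar (⇑q) x y = 0) → x = 0) (a : O) :
    a * a = QuadraticMap.polar (⇑q) a 1 • a - q a • (1 : O) := by
  have h := oct_KL q hmul hnd a 1
  rwa [mul_one] at h

/-- Linearized square relation:
`a*b + b*a = T a • b + T b • a - P a b • 1`. -/
private theorem oct_AC (q : QuadraticForm F O) (hmul : ∀ x y : O, q (x * y) = q x * q y)
    (hnd : ∀ x : O, (∀ y : O, QuadraticMap.polar (⇑q) x y = 0) → x = 0) (a b : O) :
    a * b + b * a
      = QuadraticMap.polar (⇑q) a 1 • b + QuadraticMap.polar (⇑q) b 1 • a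
        - QuadraticMap.polar (⇑q) a b • (1 : O) := by
  have h := oct_SQ q hmul hnd (a + b)
  rw [add_mul, mul_add, mul_add, QuadraticMap.polar_add_left,
    QuadraticMap.map_add (⇑q) a b, oct_SQ q hmul hnd a, oct_SQ q hmul hnd b] at h
  have h' : a * b + b * a =
      (QuadraticMap.polar (⇑q) a 1 + QuadraticMap.polar (⇑q) b 1) • (a + b)
      - (q a + q b + QuadraticMap.polar (⇑q) a b) • (1 : O)
      - (QuadraticMap.polar (⇑q) a 1 • a - q a • (1 : O))
      - (QuadraticMap.polar (⇑q) b 1 • b - q b • (1 : O)) := by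
    rw [← h]; abel
  rw [h']
  simp only [add_smul, smul_add]
  abel

end OctonionAux

/-- In an octonion algebra `O`, the subalgebra generated by two elements
`x, y` is contained in the span of `{1, x, y, xy}`: indeed that span is itself closed
under multiplication (and contains `x` and `y`), so the generated subalgebra has
dimension at most 4. -/
theorem stmt_7 (F : Type*) [Field F] (O : Type*) [NonAssocRing O] [Module F O]
    [SMulCommClass F O O] [IsScalarTower F O O]
    (q : QuadraticForm F O)
    (hmul : ∀ x y : O, q (x * y) = q x * q y)
    (hnd : ∀ x : O, (∀ y : O, QuadraticMap.polar (⇑q) x y = 0) → x = 0)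
    (hdim : Module.finrank F O = 8)
    (x y : O) :
    x ∈ Submodule.span F {(1 : O), x, y, x * y} ∧
    y ∈ Submodule.span F {(1 : O), x, y, x * y} ∧
    (∀ u ∈ Submodule.span F {(1 : O), x, y, x * y},
      ∀ v ∈ Submodule.span F {(1 : O), x, y, x * y},
        u * v ∈ Submodule.span F {(1 : O), x, y, x * y}) ∧
    Module.finrank F (Submodule.span F {(1 : O), x, y, x * y}) ≤ 4 := by
  classical
  set S : Submodule F O := Submodule.span F {(1 : O), x, y, x * y} with hS
  have h1 : (1 : O) ∈ S := Submodule.subset_span (by simp)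
  have hx : x ∈ S := Submodule.subset_span (by simp)
  have hy : y ∈ S := Submodule.subset_span (by simp)
  have hz : x * y ∈ S := Submodule.subset_span (by simp)
  -- products of generators lie in S
  have m_xx : x * x ∈ S := by
    rw [oct_SQ q hmul hnd x]; exact S.sub_mem (S.smul_mem _ hx) (S.smul_mem _ h1)
  have m_yy : y * y ∈ S := by
    rw [oct_SQ q hmul hnd y]; exact S.sub_mem (S.smul_mem _ hy) (S.smul_mem _ h1)
  have m_yx : y * x ∈ S := by
    have h := oct_AC q hmul hnd x y
    have hrw : y * x = QuadraticMap.polar (⇑q) x 1 • y + QuadraticMap.polar (⇑q) y 1 • x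
        - QuadraticMap.polar (⇑q) x y • (1 : O) - x * y := by rw [← h]; abel
    rw [hrw]
    exact S.sub_mem (S.sub_mem (S.add_mem (S.smul_mem _ hy) (S.smul_mem _ hx))
      (S.smul_mem _ h1)) hz
  have m_xz : x * (x * y) ∈ S := by
    rw [oct_KL q hmul hnd x y]
    exact S.sub_mem (S.smul_mem _ hz) (S.smul_mem _ hy)
  have m_zy : (x * y) * y ∈ S := by
    rw [oct_KR q hmul hnd x y]
    exact S.sub_mem (S.smul_mem _ hz) (S.smul_mem _ hx)
  have m_yz : y * (x * y) ∈ S := by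
    have h := oct_AC q hmul hnd y (x * y)
    have hrw : y * (x * y) = QuadraticMap.polar (⇑q) y 1 • (x * y)
        + QuadraticMap.polar (⇑q) (x * y) 1 • y
        - QuadraticMap.polar (⇑q) y (x * y) • (1 : O) - (x * y) * y := by rw [← h]; abel
    rw [hrw]
    exact S.sub_mem (S.sub_mem (S.add_mem (S.smul_mem _ hz) (S.smul_mem _ hy))
      (S.smul_mem _ h1)) m_zy
  have m_zx : (x * y) * x ∈ S := by
    have h := oct_AC q hmul hnd (x * y) x
    have hrw : (x * y) * x = QuadraticMap.polar (⇑q) (x * y) 1 • x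
        + QuadraticMap.polar (⇑q) x 1 • (x * y)
        - QuadraticMap.polar (⇑q) (x * y) x • (1 : O) - x * (x * y) := by rw [← h]; abel
    rw [hrw]
    exact S.sub_mem (S.sub_mem (S.add_mem (S.smul_mem _ hx) (S.smul_mem _ hz))
      (S.smul_mem _ h1)) m_xz
  have m_zz : (x * y) * (x * y) ∈ S := by
    rw [oct_SQ q hmul hnd (x * y)]
    exact S.sub_mem (S.smul_mem _ hz) (S.smul_mem _ h1)
  -- products of generators
  have hgen : ∀ a ∈ ({(1 : O), x, y, x * y} : Set O),
      ∀ b ∈ ({(1 : O), x, y, x * y} : Set O), a * b ∈ S := by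
    intro a ha b hb
    simp only [Set.mem_insert_iff, Set.mem_singleton_iff] at ha hb
    rcases ha with rfl | rfl | rfl | rfl <;> rcases hb with rfl | rfl | rfl | rfl <;>
      first
        | (rw [one_mul]; first | exact h1 | exact hx | exact hy | exact hz)
        | (rw [mul_one]; first | exact h1 | exact hx | exact hy | exact hz)
        | exact m_xx | exact m_yy | exact m_yx | exact m_xz | exact m_zy
        | exact m_yz | exact m_zx | exact m_zz | exact hz
  -- closure under multiplication
  have hclosed : ∀ u ∈ S, ∀ v ∈ S, u * v ∈ S := by
    intro u hu
    induction hu using Submodule.span_induction with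
    | mem a ha =>
      intro v hv
      induction hv using Submodule.span_induction with
      | mem b hb => exact hgen a ha b hb
      | zero => rw [mul_zero]; exact S.zero_mem
      | add b c _ _ ihb ihc => rw [mul_add]; exact S.add_mem ihb ihc
      | smul r b _ ihb => rw [mul_smul_comm]; exact S.smul_mem r ihb
    | zero => intro v hv; rw [zero_mul]; exact S.zero_mem
    | add a b _ _ iha ihb =>
      intro v hv; rw [add_mul]; exact S.add_mem (iha v hv) (ihb v hv)
    | smul r a _ iha =>
      intro v hv; rw [smul_mul_assoc]; exact S.smul_mem r (iha v hv)
  -- dimension bound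
  have hfr : Module.finrank F S ≤ 4 := by
    have hset : ({(1 : O), x, y, x * y} : Set O)
        = (↑({(1 : O), x, y, x * y} : Finset O) : Set O) := by simp
    have hle : Module.finrank F (Submodule.span F
        (↑({(1 : O), x, y, x * y} : Finset O) : Set O))
        ≤ ({(1 : O), x, y, x * y} : Finset O).card :=
      finrank_span_finset_le_card _
    have hcard : ({(1 : O), x, y, x * y} : Finset O).card ≤ 4 := by
      refine le_trans (Finset.card_insert_le _ _) ?_
      refine le_trans (Nat.add_le_add_right (Finset.card_insert_le _ _) 1) ?_
      refine le_trans (Nat.add_le_add_right (Nat.add_le_add_right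
        (Finset.card_insert_le _ _) 1) 1) ?_
      simp
    rw [hS, hset]
    exact le_trans hle hcard
  exact ⟨hx, hy, hclosed, hfr⟩
end

section
/- Let O be an octonion algebra over F, and let a ∈ O be a nonzero element with N(a) = 0 and tr(a) = 0, and b ∈ a^⊥ with N(b) = 0, tr(b) = 0, and b ∉ F + Fa. Then ba = −ab, a(ab) = 0, (ab)a = 0, b(ab) = 0, (ab)b = 0 and (ab)² = 0; consequently the span of {a, b, ab} is a subalgebra of O. -/
/-- If `a ≠ 0` is nilpotent (`N(a) = 0`, `tr(a) = 0`) and `b ∈ a^⊥` is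
nilpotent with `b ∉ F + Fa`, then `ba = -ab`, `a(ab) = 0`, `(ab)a = 0`, `b(ab) = 0`,
`(ab)b = 0`, `(ab)² = 0`; consequently the span of `{a, b, ab}` is a subalgebra. -/
theorem stmt_8 (F : Type*) [Field F] (O : Type*) [NonAssocRing O] [Module F O]
    [SMulCommClass F O O] [IsScalarTower F O O]
    (q : QuadraticForm F O)
    (hmul : ∀ x y : O, q (x * y) = q x * q y)
    (hnd : ∀ x : O, (∀ y : O, QuadraticMap.polar (⇑q) x y = 0) → x = 0)
    (hdim : Module.finrank F O = 8)
    (a b : O)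
    (ha0 : a ≠ 0) (haN : q a = 0) (haT : QuadraticMap.polar (⇑q) a 1 = 0)
    (hbN : q b = 0) (hbT : QuadraticMap.polar (⇑q) b 1 = 0)
    (hperp : QuadraticMap.polar (⇑q) a b = 0)
    (hb : b ∉ Submodule.span F {(1 : O), a}) :
    b * a = -(a * b) ∧
    a * (a * b) = 0 ∧ (a * b) * a = 0 ∧
    b * (a * b) = 0 ∧ (a * b) * b = 0 ∧
    (a * b) * (a * b) = 0 ∧
    (∀ u ∈ Submodule.span F {a, b, a * b},
      ∀ v ∈ Submodule.span F {a, b, a * b}, u * v ∈ Submodule.span F {a, b, a * b}) := by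
  -- basic composition identities
  have P2L : ∀ x y z : O, QuadraticMap.polar (⇑q) (x*y) (x*z)
      = q x * QuadraticMap.polar (⇑q) y z := by
    intro x y z
    simp only [QuadraticMap.polar, ← mul_add, hmul]
    ring
  have P2R : ∀ x y z : O, QuadraticMap.polar (⇑q) (x*z) (y*z)
      = QuadraticMap.polar (⇑q) x y * q z := by
    intro x y z
    simp only [QuadraticMap.polar, ← add_mul, hmul]
    ring
  have P3 : ∀ x w y z : O, QuadraticMap.polar (⇑q) (x*y) (w*z)
      + QuadraticMap.polar (⇑q) (w*y) (x*z)
      = QuadraticMap.polar (⇑q) x w * QuadraticMap.polar (⇑q) y z := by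
    intro x w y z
    have h1 := P2L (x+w) y z
    rw [add_mul, add_mul, QuadraticMap.polar_add_left, QuadraticMap.polar_add_right,
      QuadraticMap.polar_add_right] at h1
    have h2 : q (x+w) = q x + q w + QuadraticMap.polar (⇑q) x w := by
      simp only [QuadraticMap.polar]; ring
    have h3 := P2L x y z
    have h4 := P2L w y z
    rw [h2] at h1
    linear_combination h1 - h3 - h4
  have P3R : ∀ x y z w : O, QuadraticMap.polar (⇑q) (x*z) (y*w)
      + QuadraticMap.polar (⇑q) (x*w) (y*z)
      = QuadraticMap.polar (⇑q) x y * QuadraticMap.polar (⇑q) z w := by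
    intro x y z w
    have h1 := P2R x y (z+w)
    rw [mul_add, mul_add, QuadraticMap.polar_add_left, QuadraticMap.polar_add_right,
      QuadraticMap.polar_add_right] at h1
    have h2 : q (z+w) = q z + q w + QuadraticMap.polar (⇑q) z w := by
      simp only [QuadraticMap.polar]; ring
    have h3 := P2R x y z
    have h4 := P2R x y w
    rw [h2] at h1
    linear_combination h1 - h3 - h4
  have L1 : ∀ x u z : O, QuadraticMap.polar (⇑q) (x*u) z
      = QuadraticMap.polar (⇑q) x 1 * QuadraticMap.polar (⇑q) u z
        - QuadraticMap.polar (⇑q) u (x*z) := by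
    intro x u z
    have := P3 x 1 u z
    rw [one_mul, one_mul] at this
    linear_combination this
  have R1 : ∀ x u z : O, QuadraticMap.polar (⇑q) (u*x) z
      = QuadraticMap.polar (⇑q) x 1 * QuadraticMap.polar (⇑q) u z
        - QuadraticMap.polar (⇑q) u (z*x) := by
    intro x u z
    have := P3R u z x 1
    rw [mul_one, mul_one] at this
    linear_combination this
  -- key nilpotency lemmas
  have key1 : ∀ x y : O, QuadraticMap.polar (⇑q) x 1 = 0 → q x = 0 → x * (x * y) = 0 := by
    intro x y hT hN
    apply hnd
    intro z
    rw [L1 x (x*y) z, P2L x y z, hT, hN]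
    ring
  have key2 : ∀ x y : O, QuadraticMap.polar (⇑q) x 1 = 0 → q x = 0 → (y * x) * x = 0 := by
    intro x y hT hN
    apply hnd
    intro z
    rw [R1 x (y*x) z, P2R y z x, hT, hN]
    ring
  have sq0 : ∀ x : O, QuadraticMap.polar (⇑q) x 1 = 0 → q x = 0 → x * x = 0 := by
    intro x hT hN
    have := key1 x 1 hT hN
    rwa [mul_one] at this
  -- anticommutativity
  have haa : a * a = 0 := sq0 a haT haN
  have hbb : b * b = 0 := sq0 b hbT hbN
  have habT : QuadraticMap.polar (⇑q) (a+b) 1 = 0 := by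
    rw [QuadraticMap.polar_add_left, haT, hbT, add_zero]
  have habN : q (a+b) = 0 := by
    have : q (a+b) = q a + q b + QuadraticMap.polar (⇑q) a b := by
      simp only [QuadraticMap.polar]; ring
    rw [this, haN, hbN, hperp]; ring
  have hsum : (a+b) * (a+b) = 0 := sq0 (a+b) habT habN
  have hanti : a * b + b * a = 0 := by
    have h := hsum
    rw [add_mul, mul_add, mul_add, haa, hbb] at h
    simpa using h
  have hba : b * a = -(a * b) := eq_neg_of_add_eq_zero_right hanti
  have hab' : a * b = -(b * a) := by rw [hba, neg_neg]
  -- the six identities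
  have e1 : a * (a * b) = 0 := key1 a b haT haN
  have e2 : (a * b) * a = 0 := by
    rw [hab', neg_mul, key2 a b haT haN, neg_zero]
  have e3 : b * (a * b) = 0 := by
    rw [hab', mul_neg, key1 b a hbT hbN, neg_zero]
  have e4 : (a * b) * b = 0 := key2 b a hbT hbN
  have trab : QuadraticMap.polar (⇑q) (a*b) 1 = 0 := by
    have := P3 a 1 b 1
    rw [one_mul, mul_one, one_mul, haT, zero_mul] at this
    have h := QuadraticMap.polar_comm (⇑q) b a
    rw [h, hperp] at this
    linear_combination this
  have qab : q (a*b) = 0 := by rw [hmul, haN, zero_mul]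
  have e5 : (a * b) * (a * b) = 0 := sq0 (a*b) trab qab
  refine ⟨hba, e1, e2, e3, e4, e5, ?_⟩
  -- span closure
  set S := Submodule.span F ({a, b, a * b} : Set O) with hS
  have haS : a ∈ S := Submodule.subset_span (by simp)
  have hbS : b ∈ S := Submodule.subset_span (by simp)
  have habS : a * b ∈ S := Submodule.subset_span (by simp)
  have table : ∀ x ∈ ({a, b, a*b} : Set O), ∀ y ∈ ({a, b, a*b} : Set O), x * y ∈ S := by
    intro x hx y hy
    simp only [Set.mem_insert_iff, Set.mem_singleton_iff] at hx hy
    rcases hx with rfl | rfl | rfl <;> rcases hy with rfl | rfl | rfl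
    · rw [haa]; exact S.zero_mem
    · exact habS
    · rw [e1]; exact S.zero_mem
    · rw [hba]; exact S.neg_mem habS
    · rw [hbb]; exact S.zero_mem
    · rw [e3]; exact S.zero_mem
    · rw [e2]; exact S.zero_mem
    · rw [e4]; exact S.zero_mem
    · rw [e5]; exact S.zero_mem
  have step : ∀ x ∈ ({a, b, a*b} : Set O), ∀ v ∈ S, x * v ∈ S := by
    intro x hx v hv
    induction hv using Submodule.span_induction with
    | mem y hy => exact table x hx y hy
    | zero => rw [mul_zero]; exact S.zero_mem
    | add u w _ _ ihu ihw => rw [mul_add]; exact S.add_mem ihu ihw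
    | smul c u _ ihu => rw [mul_smul_comm]; exact S.smul_mem c ihu
  intro u hu v hv
  induction hu using Submodule.span_induction with
  | mem x hx => exact step x hx v hv
  | zero => rw [zero_mul]; exact S.zero_mem
  | add x y _ _ ihx ihy => rw [add_mul]; exact S.add_mem ihx ihy
  | smul c x _ ihx => rw [smul_mul_assoc]; exact S.smul_mem c ihx
end

section
/- Let O be an octonion algebra over F and v ∈ O \ F with v̄ ≠ v and N(v − v̄) = 0 (so dim C_O(v) = 4). Then the centralizer C_O(v) is closed under multiplication, i.e., it is a subalgebra of O. -/
section Aux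

variable {F : Type*} [Field F] {O : Type*} [NonAssocRing O] [Module F O]
    [SMulCommClass F O O] [IsScalarTower F O O]
    (q : QuadraticForm F O)

theorem aux_qadd (x y : O) :
    q (x + y) = q x + q y + QuadraticMap.polar (⇑q) x y := by
  simp only [QuadraticMap.polar]; ring

theorem aux_l1 (hmul : ∀ x y : O, q (x * y) = q x * q y) (x y z : O) :
    QuadraticMap.polar (⇑q) (x * y) (x * z) = q x * QuadraticMap.polar (⇑q) y z := by
  simp only [QuadraticMap.polar, ← mul_add, hmul]; ring

theorem aux_l2 (hmul : ∀ x y : O, q (x * y) = q x * q y) (x y z : O) :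
    QuadraticMap.polar (⇑q) (x * y) (z * y) = QuadraticMap.polar (⇑q) x z * q y := by
  simp only [QuadraticMap.polar, ← add_mul, hmul]; ring

theorem aux_l3 (hmul : ∀ x y : O, q (x * y) = q x * q y) (x y z t : O) :
    QuadraticMap.polar (⇑q) (x * y) (z * t) + QuadraticMap.polar (⇑q) (z * y) (x * t)
      = QuadraticMap.polar (⇑q) x z * QuadraticMap.polar (⇑q) y t := by
  have h := aux_l1 q hmul (x + z) y t
  rw [add_mul, add_mul, QuadraticMap.polar_add_left, QuadraticMap.polar_add_right,
    QuadraticMap.polar_add_right, aux_qadd] at h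
  rw [aux_l1 q hmul x y t, aux_l1 q hmul z y t] at h
  linear_combination h

theorem aux_k1 (hmul : ∀ x y : O, q (x * y) = q x * q y) (x y u : O) :
    QuadraticMap.polar (⇑q) (x * y) u
      = QuadraticMap.polar (⇑q) x 1 * QuadraticMap.polar (⇑q) y u
        - QuadraticMap.polar (⇑q) y (x * u) := by
  have h := aux_l3 q hmul x y 1 u
  rw [one_mul, one_mul] at h
  linear_combination h

theorem aux_k1' (hmul : ∀ x y : O, q (x * y) = q x * q y) (x y u : O) :
    QuadraticMap.polar (⇑q) (x * y) u
      = QuadraticMap.polar (⇑q) x u * QuadraticMap.polar (⇑q) y 1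
        - QuadraticMap.polar (⇑q) (u * y) x := by
  have h := aux_l3 q hmul x y u 1
  rw [mul_one, mul_one] at h
  linear_combination h

theorem aux_k2 (hmul : ∀ x y : O, q (x * y) = q x * q y)
    (hnd : ∀ x : O, (∀ y : O, QuadraticMap.polar (⇑q) x y = 0) → x = 0) (x y : O) :
    QuadraticMap.polar (⇑q) x 1 • (x * y) - x * (x * y) = q x • y := by
  have key : ∀ u : O, QuadraticMap.polar (⇑q)
      (QuadraticMap.polar (⇑q) x 1 • (x * y) - x * (x * y) - q x • y) u = 0 := by
    intro u
    rw [QuadraticMap.polar_sub_left, QuadraticMap.polar_sub_left,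
      QuadraticMap.polar_smul_left, QuadraticMap.polar_smul_left]
    rw [aux_k1 q hmul x (x * y) u, aux_l1 q hmul x y u]
    simp only [smul_eq_mul]
    ring
  have := hnd _ key
  rwa [sub_eq_zero] at this

theorem aux_k2' (hmul : ∀ x y : O, q (x * y) = q x * q y)
    (hnd : ∀ x : O, (∀ y : O, QuadraticMap.polar (⇑q) x y = 0) → x = 0) (x y : O) :
    QuadraticMap.polar (⇑q) x 1 • (y * x) - (y * x) * x = q x • y := by
  have key : ∀ u : O, QuadraticMap.polar (⇑q)
      (QuadraticMap.polar (⇑q) x 1 • (y * x) - (y * x) * x - q x • y) u = 0 := by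
    intro u
    rw [QuadraticMap.polar_sub_left, QuadraticMap.polar_sub_left,
      QuadraticMap.polar_smul_left, QuadraticMap.polar_smul_left]
    rw [aux_k1' q hmul (y * x) x u, aux_l2 q hmul u x y]
    rw [QuadraticMap.polar_comm (⇑q) u y]
    simp only [smul_eq_mul]
    ring
  have := hnd _ key
  rwa [sub_eq_zero] at this

theorem aux_ch (hmul : ∀ x y : O, q (x * y) = q x * q y)
    (hnd : ∀ x : O, (∀ y : O, QuadraticMap.polar (⇑q) x y = 0) → x = 0) (x : O) :
    x * x = QuadraticMap.polar (⇑q) x 1 • x - q x • (1 : O) := by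
  have h := aux_k2 q hmul hnd x 1
  rw [mul_one] at h
  linear_combination (norm := module) -h

theorem aux_lch (hmul : ∀ x y : O, q (x * y) = q x * q y)
    (hnd : ∀ x : O, (∀ y : O, QuadraticMap.polar (⇑q) x y = 0) → x = 0) (x y : O) :
    x * y + y * x = QuadraticMap.polar (⇑q) x 1 • y + QuadraticMap.polar (⇑q) y 1 • x
      - QuadraticMap.polar (⇑q) x y • (1 : O) := by
  have h := aux_ch q hmul hnd (x + y)
  rw [add_mul, mul_add, mul_add, aux_ch q hmul hnd x, aux_ch q hmul hnd y,
    aux_qadd, QuadraticMap.polar_add_left, add_smul, add_smul, add_smul, smul_add,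
    smul_add] at h
  linear_combination (norm := module) h

theorem aux_lk2a (hmul : ∀ x y : O, q (x * y) = q x * q y)
    (hnd : ∀ x : O, (∀ y : O, QuadraticMap.polar (⇑q) x y = 0) → x = 0) (x z y : O) :
    (QuadraticMap.polar (⇑q) x 1 • (z * y) - x * (z * y))
      + (QuadraticMap.polar (⇑q) z 1 • (x * y) - z * (x * y))
      = QuadraticMap.polar (⇑q) x z • y := by
  have key : ∀ u : O, QuadraticMap.polar (⇑q)
      ((QuadraticMap.polar (⇑q) x 1 • (z * y) - x * (z * y))
        + (QuadraticMap.polar (⇑q) z 1 • (x * y) - z * (x * y))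
        - QuadraticMap.polar (⇑q) x z • y) u = 0 := by
    intro u
    rw [QuadraticMap.polar_sub_left, QuadraticMap.polar_add_left,
      QuadraticMap.polar_sub_left, QuadraticMap.polar_sub_left,
      QuadraticMap.polar_smul_left, QuadraticMap.polar_smul_left,
      QuadraticMap.polar_smul_left]
    rw [aux_k1 q hmul x (z * y) u, aux_k1 q hmul z (x * y) u]
    have h4 := aux_l3 q hmul z y x u
    rw [QuadraticMap.polar_comm (⇑q) z x] at h4
    simp only [smul_eq_mul]
    linear_combination h4
  have := hnd _ key
  rwa [sub_eq_zero] at this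

theorem aux_lk2b (hmul : ∀ x y : O, q (x * y) = q x * q y)
    (hnd : ∀ x : O, (∀ y : O, QuadraticMap.polar (⇑q) x y = 0) → x = 0) (x z y : O) :
    (QuadraticMap.polar (⇑q) z 1 • (y * x) - (y * x) * z)
      + (QuadraticMap.polar (⇑q) x 1 • (y * z) - (y * z) * x)
      = QuadraticMap.polar (⇑q) x z • y := by
  have key : ∀ u : O, QuadraticMap.polar (⇑q)
      ((QuadraticMap.polar (⇑q) z 1 • (y * x) - (y * x) * z)
        + (QuadraticMap.polar (⇑q) x 1 • (y * z) - (y * z) * x)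
        - QuadraticMap.polar (⇑q) x z • y) u = 0 := by
    intro u
    rw [QuadraticMap.polar_sub_left, QuadraticMap.polar_add_left,
      QuadraticMap.polar_sub_left, QuadraticMap.polar_sub_left,
      QuadraticMap.polar_smul_left, QuadraticMap.polar_smul_left,
      QuadraticMap.polar_smul_left]
    rw [aux_k1' q hmul (y * x) z u, aux_k1' q hmul (y * z) x u]
    have h4 := aux_l3 q hmul u x y z
    rw [QuadraticMap.polar_comm (⇑q) u y] at h4
    have hc : QuadraticMap.polar (⇑q) (u * z) (y * x)
        = QuadraticMap.polar (⇑q) (y * x) (u * z) := QuadraticMap.polar_comm _ _ _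
    simp only [smul_eq_mul]
    linear_combination h4 + hc
  have := hnd _ key
  rwa [sub_eq_zero] at this

end Aux

/-- For `v ∉ F·1` with `v̄ ≠ v` and `N(v - v̄) = 0`, the centralizer
`C_O(v)` is closed under multiplication. -/
theorem stmt_10 (F : Type*) [Field F] (O : Type*) [NonAssocRing O] [Module F O]
    [SMulCommClass F O O] [IsScalarTower F O O]
    (q : QuadraticForm F O)
    (hmul : ∀ x y : O, q (x * y) = q x * q y)
    (hnd : ∀ x : O, (∀ y : O, QuadraticMap.polar (⇑q) x y = 0) → x = 0)
    (hdim : Module.finrank F O = 8)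
    (v : O)
    (hvF : v ∉ Submodule.span F {(1 : O)})
    (hv : QuadraticMap.polar (⇑q) v 1 • (1 : O) - v ≠ v)
    (hvN : q (v - (QuadraticMap.polar (⇑q) v 1 • (1 : O) - v)) = 0) :
    ∀ x y : O, x * v = v * x → y * v = v * y → (x * y) * v = v * (x * y) := by
  intro x y hx hy
  -- q 1 = 1
  have hq1 : q 1 = 1 := by
    have h := hmul 1 1
    rw [mul_one] at h
    have h' : q 1 * (q 1 - 1) = 0 := by linear_combination -h
    rcases mul_eq_zero.mp h' with h0 | h1
    · exfalso
      have hall : ∀ z : O, q z = 0 := by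
        intro z
        have := hmul z 1
        rwa [mul_one, h0, mul_zero] at this
      have hz : ∀ z : O, z = 0 := by
        intro z
        apply hnd
        intro u
        simp [QuadraticMap.polar, hall]
      have : Subsingleton O := ⟨fun a b => by rw [hz a, hz b]⟩
      rw [Module.finrank_zero_of_subsingleton] at hdim
      exact (by norm_num : (0:ℕ) ≠ 8) hdim
    · linear_combination h1
  set t : F := QuadraticMap.polar (⇑q) v 1 with ht
  set w : O := v - (t • (1:O) - v) with hw
  have hwne : w ≠ 0 := by
    rw [hw, sub_ne_zero]
    exact fun h => hv h.symm
  have hqw : q w = 0 := hvN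
  have hTw : QuadraticMap.polar (⇑q) w 1 = 0 := by
    rw [hw, QuadraticMap.polar_sub_left, QuadraticMap.polar_sub_left,
      QuadraticMap.polar_smul_left]
    have h11 : QuadraticMap.polar (⇑q) (1:O) 1 = 2 * q 1 := by
      have := QuadraticMap.polar_self q (1:O)
      simpa [two_smul, two_mul] using this
    rw [h11, hq1, ← ht]
    simp only [smul_eq_mul]
    ring
  by_cases h2 : (2 : F) = 0
  · -- characteristic 2 : hypotheses are contradictory
    exfalso
    have hvv : v + v = 0 := by
      have h' : (2 : F) • v = 0 := by rw [h2, zero_smul]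
      rwa [two_smul] at h'
    have hwt : w = -(t • (1:O)) := by
      rw [hw]
      have h' : v - (t • (1:O) - v) = (v + v) - t • (1:O) := by abel
      rw [h', hvv, zero_sub]
    have ht2 : t * t = 0 := by
      have : q w = t * t := by
        rw [hwt, QuadraticMap.map_neg, QuadraticMap.map_smul, hq1]
        simp
      rw [hqw] at this
      exact this.symm
    have ht0 : t = 0 := by
      rcases mul_eq_zero.mp ht2 with h | h <;> exact h
    apply hwne
    rw [hwt, ht0, zero_smul, neg_zero]
  · -- main case: characteristic ≠ 2
    have hchw : w * w = 0 := by
      rw [aux_ch q hmul hnd w, hTw, hqw, zero_smul, zero_smul, sub_zero]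
    have key : ∀ a : O, a * w = w * a →
        QuadraticMap.polar (⇑q) a w = 0 ∧
          a * w = ((2:F)⁻¹ * QuadraticMap.polar (⇑q) a 1) • w := by
      intro a ha
      have hlch := aux_lch q hmul hnd a w
      rw [hTw, zero_smul, add_zero, ← ha] at hlch
      -- hlch : a * w + a * w = B a 1 • w - B a w • 1
      have hE2 : (a * w) * w = 0 := by
        have h' := aux_k2' q hmul hnd w a
        rw [hTw, hqw, zero_smul, zero_smul, zero_sub, neg_eq_zero] at h'
        exact h'
      have hmw := congrArg (· * w) hlch
      simp only [add_mul, sub_mul, smul_mul_assoc, one_mul, hchw, hE2, smul_zero,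
        add_zero, zero_sub] at hmw
      -- hmw : 0 = -(B a w • w)
      have hBaw : QuadraticMap.polar (⇑q) a w = 0 := by
        by_contra hc
        apply hwne
        have hzw : QuadraticMap.polar (⇑q) a w • w = 0 := by
          rw [← neg_eq_zero, ← hmw]
        calc w = (QuadraticMap.polar (⇑q) a w)⁻¹ • (QuadraticMap.polar (⇑q) a w • w) := by
              rw [inv_smul_smul₀ hc]
          _ = 0 := by rw [hzw, smul_zero]
      rw [hBaw, zero_smul, sub_zero] at hlch
      refine ⟨hBaw, ?_⟩
      have h2s : (2:F) • (a * w) = QuadraticMap.polar (⇑q) a 1 • w := by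
        rw [two_smul]; exact hlch
      calc a * w = (2:F)⁻¹ • ((2:F) • (a * w)) := by rw [inv_smul_smul₀ h2]
        _ = (2:F)⁻¹ • (QuadraticMap.polar (⇑q) a 1 • w) := by rw [h2s]
        _ = ((2:F)⁻¹ * QuadraticMap.polar (⇑q) a 1) • w := by rw [smul_smul]
    have hxw : x * w = w * x := by
      simp only [hw, mul_sub, sub_mul, mul_smul_comm, smul_mul_assoc, mul_one, one_mul, hx]
    have hyw : y * w = w * y := by
      simp only [hw, mul_sub, sub_mul, mul_smul_comm, smul_mul_assoc, mul_one, one_mul, hy]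
    obtain ⟨hBxw, hxww⟩ := key x hxw
    obtain ⟨hByw, hyww⟩ := key y hyw
    set cx : F := (2:F)⁻¹ * QuadraticMap.polar (⇑q) x 1 with hcx
    set cy : F := (2:F)⁻¹ * QuadraticMap.polar (⇑q) y 1 with hcy
    have hBx1 : QuadraticMap.polar (⇑q) x 1 = 2 * cx := by
      rw [hcx, ← mul_assoc, mul_inv_cancel₀ h2, one_mul]
    have hBy1 : QuadraticMap.polar (⇑q) y 1 = 2 * cy := by
      rw [hcy, ← mul_assoc, mul_inv_cancel₀ h2, one_mul]
    -- (x*y)*w = (cx*cy) • w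
    have hxyw : (x * y) * w = (cx * cy) • w := by
      have h' := aux_lk2b q hmul hnd y w x
      rw [hTw, hByw, zero_smul, zero_smul, zero_sub] at h'
      -- h' : -((x*y)*w) + (B y 1 • (x*w) - (x*w)*y) = 0
      have h'' : (x * y) * w = QuadraticMap.polar (⇑q) y 1 • (x * w) - (x * w) * y := by
        linear_combination (norm := module) -h'
      rw [h'', hxww, smul_smul, smul_mul_assoc, ← hyw, hyww, smul_smul, hBy1]
      match_scalars <;> ring
    -- w*(x*y) = (cx*cy) • w
    have hwxy : w * (x * y) = (cx * cy) • w := by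
      have h' := aux_lk2a q hmul hnd x w y
      rw [hTw, hBxw, zero_smul, zero_smul, zero_sub] at h'
      have h'' : w * (x * y) = QuadraticMap.polar (⇑q) x 1 • (w * y) - x * (w * y) := by
        linear_combination (norm := module) -h'
      rw [h'', ← hyw, hyww, smul_smul, mul_smul_comm, hxww, smul_smul, hBx1]
      match_scalars <;> ring
    have hfin : (x * y) * w = w * (x * y) := by rw [hxyw, hwxy]
    simp only [hw, mul_sub, sub_mul, mul_smul_comm, smul_mul_assoc, mul_one, one_mul] at hfin
    have h2v : (2:F) • ((x * y) * v) = (2:F) • (v * (x * y)) := by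
      rw [two_smul, two_smul]
      linear_combination (norm := module) hfin
    calc (x * y) * v = (2:F)⁻¹ • ((2:F) • ((x * y) * v)) := by rw [inv_smul_smul₀ h2]
      _ = (2:F)⁻¹ • ((2:F) • (v * (x * y))) := by rw [h2v]
      _ = v * (x * y) := by rw [inv_smul_smul₀ h2]
end

section
/- Let O be a split octonion algebra and a ∈ O a nonzero element with N(a) = 0 and tr(a) = 0 (equivalently a² = 0 ≠ a). Then aO = {x ∈ O : ax = 0} and (aO)(aO) ⊆ aO; that is, aO is a 4-dimensional subalgebra of O. -/
/-!
With `x̄ = B(x,1) - x`, multiplicativity of the nondegenerate norm gives `x̄(xy) = N(x) y`, hence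
`x² = B(x,1) x - N(x)` and the left alternative law `x(xy) = (xx)y`. For `a` with
`N(a) = B(a,1) = 0` this gives `a² = 0`, so `a(ax) = 0`. Conversely, for `d` with `B(a,d) = -1`
the linearized alternative law gives `a(dx) = x` whenever `ax = 0`. So `aO = ker L_a`, of
dimension `4` by rank–nullity, and `a((ax)(ay)) = 0` by the same linearized law.
-/

open QuadraticMap

namespace CompositionAlgebra

section CommRing

variable {R O : Type*} [CommRing R] [NonAssocRing O] [Module R O] {q : QuadraticForm R O}

theorem polar_mul_mul_left (hmul : ∀ x y : O, q (x * y) = q x * q y) (x y z : O) :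
    polar q (x * y) (x * z) = q x * polar q y z := by
  simp only [polar, ← mul_add, hmul]
  ring

theorem polar_mul_mul_add_polar_mul_mul (hmul : ∀ x y : O, q (x * y) = q x * q y)
    (x u y z : O) :
    polar q (x * y) (u * z) + polar q (u * y) (x * z) = polar q x u * polar q y z := by
  have h := polar_mul_mul_left hmul (x + u) y z
  have hq : q (x + u) = q x + q u + polar q x u := by
    simp only [polar]
    ring
  rw [add_mul, add_mul, polar_add_left, polar_add_right, polar_add_right, hq] at h
  linear_combination h - polar_mul_mul_left hmul x y z - polar_mul_mul_left hmul u y z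

theorem map_one_of_map_mul [NoZeroDivisors R] [Nontrivial O]
    (hmul : ∀ x y : O, q (x * y) = q x * q y)
    (hnd : ∀ x : O, (∀ y : O, polar q x y = 0) → x = 0) : q 1 = 1 := by
  have h : q 1 * (q 1 - 1) = 0 := by
    have h11 := hmul 1 1
    rw [one_mul] at h11
    linear_combination -h11
  refine sub_eq_zero.mp ((mul_eq_zero.mp h).resolve_left fun h1 => ?_)
  have hq : ∀ z : O, q z = 0 := fun z => by rw [← one_mul z, hmul, h1, zero_mul]
  obtain ⟨x, hx⟩ := exists_ne (0 : O)
  exact hx (hnd x fun y => by simp only [polar, hq, sub_zero])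

def conj (q : QuadraticForm R O) (x : O) : O := polar q x 1 • 1 - x

theorem polar_conj_one (hq1 : q 1 = 1) (x : O) : polar q (conj q x) 1 = polar q x 1 := by
  have h11 : polar q (1 : O) 1 = 2 := by
    rw [polar_self, hq1, two_smul, one_add_one_eq_two]
  rw [conj, polar_sub_left, polar_smul_left, h11, smul_eq_mul]
  ring

theorem conj_conj (hq1 : q 1 = 1) (x : O) : conj q (conj q x) = x := by
  rw [conj, polar_conj_one hq1, conj]
  abel

variable [IsScalarTower R O O]

theorem conj_mul (x z : O) : conj q x * z = polar q x 1 • z - x * z := by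
  rw [conj, sub_mul, smul_mul_assoc, one_mul]

theorem polar_mul_left_eq_polar_conj_mul (hmul : ∀ x y : O, q (x * y) = q x * q y)
    (x y w : O) : polar q (x * y) w = polar q y (conj q x * w) := by
  have h := polar_mul_mul_add_polar_mul_mul hmul x 1 y w
  rw [one_mul, one_mul] at h
  rw [conj_mul, polar_sub_right, polar_smul_right, smul_eq_mul]
  linear_combination h

variable (hmul : ∀ x y : O, q (x * y) = q x * q y)
  (hnd : ∀ x : O, (∀ y : O, polar q x y = 0) → x = 0) (hq1 : q 1 = 1)
include hmul hnd hq1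

theorem conj_mul_mul (x y : O) : conj q x * (x * y) = q x • y := by
  refine sub_eq_zero.mp (hnd _ fun z => ?_)
  rw [polar_sub_left, polar_smul_left, polar_mul_left_eq_polar_conj_mul hmul,
    conj_conj hq1, polar_mul_mul_left hmul, smul_eq_mul, sub_self]

theorem mul_self_eq (x : O) : x * x = polar q x 1 • x - q x • 1 := by
  rw [← conj_mul_mul hmul hnd hq1 x 1, mul_one, conj_mul]
  abel

theorem mul_mul_self_left (x y : O) : x * (x * y) = x * x * y := by
  have h := conj_mul_mul hmul hnd hq1 x y
  rw [conj_mul] at h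
  rw [mul_self_eq hmul hnd hq1, sub_mul, smul_mul_assoc, smul_mul_assoc, one_mul, ← h]
  abel

theorem mul_mul_add_mul_mul (x u y : O) :
    x * (u * y) + u * (x * y) = (x * u + u * x) * y :=
  calc x * (u * y) + u * (x * y) = (x + u) * ((x + u) * y) - x * (x * y) - u * (u * y) := by
        simp only [mul_add, add_mul]; abel
    _ = (x + u) * (x + u) * y - x * x * y - u * u * y := by
        simp only [mul_mul_self_left hmul hnd hq1]
    _ = (x * u + u * x) * y := by
        simp only [mul_add, add_mul]; abel

theorem mul_add_mul_eq_polar (x u : O) :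
    x * u + u * x = polar q x 1 • u + polar q u 1 • x - polar q x u • 1 := by
  have hq : q (x + u) = q x + q u + polar q x u := by
    simp only [polar]
    ring
  calc x * u + u * x = (x + u) * (x + u) - x * x - u * u := by
        simp only [mul_add, add_mul]; abel
    _ = _ := by
        simp only [mul_self_eq hmul hnd hq1, hq, polar_add_left, add_smul, smul_add]; abel

variable {a : O} (haT : polar q a 1 = 0)
include haT

theorem mul_mul_eq_self_of_mul_eq_zero {d : O} (hd : polar q a d = -1) {x : O} (hx : a * x = 0) :
    a * (d * x) = x := by
  have h := mul_mul_add_mul_mul hmul hnd hq1 a d x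
  rw [mul_add_mul_eq_polar hmul hnd hq1, haT, hd, hx, mul_zero, add_zero] at h
  rw [h, zero_smul, zero_add, neg_smul, one_smul, sub_neg_eq_add, add_mul, smul_mul_assoc, hx,
    smul_zero, zero_add, one_mul]

variable (haN : q a = 0)
include haN

theorem mul_mul_eq_zero_of_isotropic (x : O) : a * (a * x) = 0 := by
  rw [mul_mul_self_left hmul hnd hq1, mul_self_eq hmul hnd hq1, haT, haN, zero_smul, zero_smul,
    sub_zero, zero_mul]

theorem range_mul_eq_setOf_mul_eq_zero {d : O} (hd : polar q a d = -1) :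
    Set.range (a * ·) = {x | a * x = 0} :=
  Set.ext fun x => ⟨by rintro ⟨y, rfl⟩; exact mul_mul_eq_zero_of_isotropic hmul hnd hq1 haT haN y,
    fun hx => ⟨d * x, mul_mul_eq_self_of_mul_eq_zero hmul hnd hq1 haT hd hx⟩⟩

/-- `B(a, ax) = N(a) B(1, x) = 0` makes `ax a + a ax` a multiple of `a`, which kills `ay`. -/
theorem mul_mul_mul_mul_eq_zero_of_isotropic (x y : O) : a * ((a * x) * (a * y)) = 0 := by
  have h := mul_mul_add_mul_mul hmul hnd hq1 a (a * x) (a * y)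
  have hax : polar q a (a * x) = 0 := by
    simpa only [mul_one, haN, zero_mul] using polar_mul_mul_left hmul a 1 x
  rw [mul_mul_eq_zero_of_isotropic hmul hnd hq1 haT haN, mul_zero, add_zero,
    mul_add_mul_eq_polar hmul hnd hq1, haT, hax, zero_smul, zero_smul, zero_add, sub_zero,
    smul_mul_assoc, mul_mul_eq_zero_of_isotropic hmul hnd hq1 haT haN, smul_zero] at h
  exact h

end CommRing

theorem exists_polar_eq_neg_one {F O : Type*} [Field F] [AddCommGroup O] [Module F O]
    {q : QuadraticForm F O} (hnd : ∀ x : O, (∀ y : O, polar q x y = 0) → x = 0) {a : O}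
    (ha0 : a ≠ 0) : ∃ d, polar q a d = -1 := by
  by_contra! h
  refine ha0 (hnd a fun y => by_contra fun hy => h (-(polar q a y)⁻¹ • y) ?_)
  rw [polar_smul_right, smul_eq_mul, neg_mul, inv_mul_cancel₀ hy]

end CompositionAlgebra

open CompositionAlgebra in
theorem stmt_11_general (F : Type*) [Field F] (O : Type*) [NonAssocRing O] [Module F O]
    [SMulCommClass F O O] [IsScalarTower F O O]
    (q : QuadraticForm F O)
    (hmul : ∀ x y : O, q (x * y) = q x * q y)
    (hnd : ∀ x : O, (∀ y : O, QuadraticMap.polar (⇑q) x y = 0) → x = 0)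
    (hdim : Module.finrank F O = 8)
    (a : O) (ha0 : a ≠ 0) (haN : q a = 0) (haT : QuadraticMap.polar (⇑q) a 1 = 0) :
    (Set.range (fun x : O => a * x) = {x : O | a * x = 0}) ∧
    (∀ u ∈ LinearMap.range (LinearMap.mulLeft F a),
      ∀ v ∈ LinearMap.range (LinearMap.mulLeft F a),
        u * v ∈ LinearMap.range (LinearMap.mulLeft F a)) ∧
    Module.finrank F (LinearMap.range (LinearMap.mulLeft F a)) = 4 := by
  have : Nontrivial O := ⟨a, 0, ha0⟩
  have hq1 := map_one_of_map_mul hmul hnd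
  obtain ⟨d, hd⟩ := exists_polar_eq_neg_one hnd ha0
  have hrange := range_mul_eq_setOf_mul_eq_zero hmul hnd hq1 haT haN hd
  have hrk : LinearMap.range (LinearMap.mulLeft F a) =
      LinearMap.ker (LinearMap.mulLeft F a) := by
    ext x
    simpa using Set.ext_iff.mp hrange x
  refine ⟨hrange, ?_, ?_⟩
  · rintro _ ⟨x, rfl⟩ _ ⟨y, rfl⟩
    rw [hrk]
    exact mul_mul_mul_mul_eq_zero_of_isotropic hmul hnd hq1 haT haN x y
  · have : FiniteDimensional F O := Module.finite_of_finrank_eq_succ hdim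
    have h := LinearMap.finrank_range_add_finrank_ker (LinearMap.mulLeft F a)
    rw [hdim, ← hrk] at h
    omega

/-- In a split octonion algebra, if `a ≠ 0` with `N(a) = 0` and
`tr(a) = 0` (equivalently `a² = 0 ≠ a`), then `aO = {x : ax = 0}`, `aO` is closed under
multiplication, and it has dimension 4. -/
theorem stmt_11 (F : Type*) [Field F] (O : Type*) [NonAssocRing O] [Module F O]
    [SMulCommClass F O O] [IsScalarTower F O O]
    (q : QuadraticForm F O)
    (hmul : ∀ x y : O, q (x * y) = q x * q y)
    (hnd : ∀ x : O, (∀ y : O, QuadraticMap.polar (⇑q) x y = 0) → x = 0)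
    (hdim : Module.finrank F O = 8)
    (hsplit : ∃ x : O, x ≠ 0 ∧ q x = 0)
    (a : O) (ha0 : a ≠ 0) (haN : q a = 0) (haT : QuadraticMap.polar (⇑q) a 1 = 0) :
    (Set.range (fun x : O => a * x) = {x : O | a * x = 0}) ∧
    (∀ u ∈ LinearMap.range (LinearMap.mulLeft F a),
      ∀ v ∈ LinearMap.range (LinearMap.mulLeft F a),
        u * v ∈ LinearMap.range (LinearMap.mulLeft F a)) ∧
    Module.finrank F (LinearMap.range (LinearMap.mulLeft F a)) = 4 :=
  stmt_11_general F O q hmul hnd hdim a ha0 haN haT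
end

section
/- Let O be a split octonion algebra and a ∈ O with a² = 0 ≠ a. Then the subalgebras aO and Oa are anti-isomorphic via the standard involution κ, but aO and Oa are not isomorphic as F-algebras: a satisfies a·(aO) = {0}, while no nonzero b ∈ aO satisfies (aO)·b = {0}. -/
namespace Stmt12Aux

variable {F : Type*} [Field F] {O : Type*} [NonAssocRing O] [Module F O]
  [SMulCommClass F O O] [IsScalarTower F O O]

private lemma scal_zero {c : F} {v : O} (h : c • v = 0) (hv : v ≠ 0) : c = 0 := by
  by_contra hc
  exact hv (by rw [← inv_smul_smul₀ hc v, h, smul_zero])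

variable (q : QuadraticForm F O)


section WithMul
variable (hmul : ∀ x y : O, q (x * y) = q x * q y)
include hmul

private lemma pml (z x y : O) : QuadraticMap.polar (⇑q) (z*x) (z*y) = q z * QuadraticMap.polar (⇑q) x y := by
  simp only [QuadraticMap.polar, ← mul_add, hmul]; ring

private lemma pmr (z x y : O) : QuadraticMap.polar (⇑q) (x*z) (y*z) = QuadraticMap.polar (⇑q) x y * q z := by
  simp only [QuadraticMap.polar, ← add_mul, hmul]; ring

private lemma I2 (x y u w : O) :
    QuadraticMap.polar (⇑q) (x*u) (y*w) + QuadraticMap.polar (⇑q) (x*w) (y*u) = QuadraticMap.polar (⇑q) x y * QuadraticMap.polar (⇑q) u w := by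
  have h := pmr q hmul (u+w) x y
  rw [mul_add, mul_add, QuadraticMap.polar_add_left, QuadraticMap.polar_add_right,
    QuadraticMap.polar_add_right] at h
  have hq : q (u + w) = QuadraticMap.polar (⇑q) u w + q u + q w := by
    simp only [QuadraticMap.polar]; ring
  rw [hq] at h
  have h1 := pmr q hmul u x y
  have h2 := pmr q hmul w x y
  linear_combination h - h1 - h2

private lemma AdjL (x z w : O) :
    QuadraticMap.polar (⇑q) (x*z) w = QuadraticMap.polar (⇑q) x 1 * QuadraticMap.polar (⇑q) z w - QuadraticMap.polar (⇑q) z (x*w) := by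
  have h := I2 q hmul x 1 z w
  rw [one_mul, one_mul, QuadraticMap.polar_comm (⇑q) (x*w) z] at h
  linear_combination h

variable (hnd : ∀ x : O, (∀ y : O, QuadraticMap.polar (⇑q) x y = 0) → x = 0)
include hnd

private lemma CH (x : O) : x*x = QuadraticMap.polar (⇑q) x 1 • x - q x • 1 := by
  have key : ∀ w, QuadraticMap.polar (⇑q) (x*x - (QuadraticMap.polar (⇑q) x 1 • x - q x • 1)) w = 0 := by
    intro w
    have h1 := AdjL q hmul x x w
    have h2 := pml q hmul x 1 w
    rw [mul_one] at h2
    rw [QuadraticMap.polar_sub_left, QuadraticMap.polar_sub_left,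
      QuadraticMap.polar_smul_left, QuadraticMap.polar_smul_left, smul_eq_mul, smul_eq_mul]
    linear_combination h1 - h2
  have h := hnd _ key
  rwa [sub_eq_zero] at h

private lemma CHlin (x y : O) :
    x*y + y*x = QuadraticMap.polar (⇑q) x 1 • y + QuadraticMap.polar (⇑q) y 1 • x - QuadraticMap.polar (⇑q) x y • 1 := by
  have h := CH q hmul hnd (x + y)
  rw [mul_add, add_mul, add_mul, CH q hmul hnd x, CH q hmul hnd y,
    QuadraticMap.polar_add_left] at h
  have hq : q (x + y) = QuadraticMap.polar (⇑q) x y + q x + q y := by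
    simp only [QuadraticMap.polar]; ring
  rw [hq] at h
  linear_combination (norm := module) h

variable {a : O} (ha0 : a ≠ 0) (ha2 : a * a = 0)
include ha0 ha2

private lemma qa_ta : q a = 0 ∧ QuadraticMap.polar (⇑q) a 1 = 0 := by
  have h := CH q hmul hnd a
  rw [ha2] at h
  have h2 : q a • (1:O) = QuadraticMap.polar (⇑q) a 1 • a := by linear_combination (norm := module) h
  have h3 : a * (q a • (1:O)) = a * (QuadraticMap.polar (⇑q) a 1 • a) := by rw [h2]
  rw [mul_smul_comm, mul_smul_comm, mul_one, ha2, smul_zero] at h3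
  have hq : q a = 0 := scal_zero h3 ha0
  refine ⟨hq, ?_⟩
  rw [hq, zero_smul] at h2
  exact scal_zero h2.symm ha0

private lemma aLax (x : O) : a * (a * x) = 0 := by
  obtain ⟨hqa, hta⟩ := qa_ta q hmul hnd ha0 ha2
  refine hnd _ fun w => ?_
  have h1 := AdjL q hmul a (a*x) w
  have h2 := pml q hmul a x w
  rw [h1, h2, hta, hqa]; ring

/-- Key lemma: if `a*b = 0` then `a*(y*b) = -(QuadraticMap.polar (⇑q) a y) • b`. -/
private lemma akey {b : O} (hab : a * b = 0) (y : O) :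
    a * (y * b) = (-(QuadraticMap.polar (⇑q) a y)) • b := by
  obtain ⟨hqa, hta⟩ := qa_ta q hmul hnd ha0 ha2
  have key : ∀ w, QuadraticMap.polar (⇑q) (a*(y*b) - (-(QuadraticMap.polar (⇑q) a y)) • b) w = 0 := by
    intro w
    have h1 := AdjL q hmul a (y*b) w
    have h2 := I2 q hmul y a b w
    rw [hab, QuadraticMap.polar_zero_right] at h2
    rw [QuadraticMap.polar_sub_left, QuadraticMap.polar_smul_left, smul_eq_mul, h1, hta]
    rw [add_zero, QuadraticMap.polar_comm (⇑q) y a] at h2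
    linear_combination -h2
  have h := hnd _ key
  rwa [sub_eq_zero] at h

private lemma exists_y0 : ∃ y₀ : O, QuadraticMap.polar (⇑q) a y₀ = 1 := by
  have : ∃ y, QuadraticMap.polar (⇑q) a y ≠ 0 := by
    by_contra h
    push_neg at h
    exact ha0 (hnd a h)
  obtain ⟨y, hy⟩ := this
  refine ⟨(QuadraticMap.polar (⇑q) a y)⁻¹ • y, ?_⟩
  rw [QuadraticMap.polar_smul_right, smul_eq_mul, inv_mul_cancel₀ hy]

/-- The core annihilator contradiction. -/
private lemma core {b : O} (hb0 : b ≠ 0) (hab : a * b = 0) (hqb : q b = 0)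
    (H : ∀ z : O, (a*z)*b = 0) : False := by
  obtain ⟨hqa, hta⟩ := qa_ta q hmul hnd ha0 ha2
  obtain ⟨y₀, hy₀⟩ := exists_y0 q hmul hnd ha0 ha2
  -- star : QuadraticMap.polar (⇑q) (a*u) (y*b) = QuadraticMap.polar (⇑q) a y * QuadraticMap.polar (⇑q) u b
  have star : ∀ u y : O, QuadraticMap.polar (⇑q) (a*u) (y*b) = QuadraticMap.polar (⇑q) a y * QuadraticMap.polar (⇑q) u b := by
    intro u y
    have h := I2 q hmul a y u b
    rw [hab, QuadraticMap.polar_zero_left] at h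
    linear_combination h
  -- b*b = 0
  have hb2 : b * b = 0 := by
    have h := H (y₀ * b)
    rw [akey q hmul hnd ha0 ha2 hab y₀, hy₀] at h
    have : (-(1:F)) • b * b = -(b*b) := by
      rw [neg_smul, one_smul, neg_mul]
    rw [this, neg_eq_zero] at h
    exact h
  -- trace of b is zero
  have htb : QuadraticMap.polar (⇑q) b 1 = 0 := by
    have h := CH q hmul hnd b
    rw [hb2, hqb, zero_smul, sub_zero] at h
    exact scal_zero h.symm hb0
  -- aO ⊥ Ob
  have orth : ∀ m w : O, QuadraticMap.polar (⇑q) (a*m) (w*b) = 0 := by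
    intro m w
    have h := I2 q hmul (a*m) w b 1
    rw [mul_one, mul_one, H m, QuadraticMap.polar_zero_left, htb, mul_zero] at h
    linear_combination h
  -- conclude b = 0
  have hbz : b = 0 := by
    refine hnd b fun u => ?_
    have h1 := star u y₀
    rw [hy₀, one_mul, orth u y₀] at h1
    rw [QuadraticMap.polar_comm]
    exact h1.symm
  exact hb0 hbz

end WithMul

end Stmt12Aux

open Stmt12Aux in
/-- For `a ≠ 0` with `a² = 0` in a split octonion algebra, the standard
involution `κ` carries `aO` onto `Oa` and reverses products (so `aO` and `Oa` are
anti-isomorphic), yet `aO` and `Oa` are not isomorphic as `F`-algebras: `a·(aO) = 0`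
while no nonzero `b ∈ aO` satisfies `(aO)·b = 0`. -/
theorem stmt_12 (F : Type*) [Field F] (O : Type*) [NonAssocRing O] [Module F O]
    [SMulCommClass F O O] [IsScalarTower F O O]
    (q : QuadraticForm F O)
    (hmul : ∀ x y : O, q (x * y) = q x * q y)
    (hnd : ∀ x : O, (∀ y : O, QuadraticMap.polar (⇑q) x y = 0) → x = 0)
    (hdim : Module.finrank F O = 8)
    (hsplit : ∃ x : O, x ≠ 0 ∧ q x = 0)
    (a : O) (ha0 : a ≠ 0) (ha2 : a * a = 0) :
    ((fun x : O => QuadraticMap.polar (⇑q) x 1 • (1 : O) - x) ''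
        (LinearMap.range (LinearMap.mulLeft F a) : Set O) =
      (LinearMap.range (LinearMap.mulRight F a) : Set O)) ∧
    (∀ x y : O,
      QuadraticMap.polar (⇑q) (x * y) 1 • (1 : O) - x * y =
        (QuadraticMap.polar (⇑q) y 1 • (1 : O) - y) *
          (QuadraticMap.polar (⇑q) x 1 • (1 : O) - x)) ∧
    (∀ x : O, a * (a * x) = 0) ∧
    (∀ b ∈ LinearMap.range (LinearMap.mulLeft F a), b ≠ 0 →
      ∃ u ∈ LinearMap.range (LinearMap.mulLeft F a), u * b ≠ 0) ∧
    ¬ ∃ e : LinearMap.range (LinearMap.mulLeft F a) ≃ₗ[F]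
          LinearMap.range (LinearMap.mulRight F a),
        ∀ (x y : O) (hx : x ∈ LinearMap.range (LinearMap.mulLeft F a))
          (hy : y ∈ LinearMap.range (LinearMap.mulLeft F a))
          (hxy : x * y ∈ LinearMap.range (LinearMap.mulLeft F a)),
          (e ⟨x * y, hxy⟩ : O) = (e ⟨x, hx⟩ : O) * (e ⟨y, hy⟩ : O) := by
  classical
  set k : O → O := fun x : O => QuadraticMap.polar (⇑q) x 1 • (1 : O) - x with hk
  obtain ⟨hqa, hta⟩ := qa_ta q hmul hnd ha0 ha2
  -- q 1 = 1
  have hq1 : q (1:O) = 1 := by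
    have h0 : q (1:O) = q 1 * q 1 := by
      have := hmul 1 1; rwa [one_mul] at this
    have hcases : q (1:O) * (q (1:O) - 1) = 0 := by linear_combination -h0
    rcases mul_eq_zero.mp hcases with h | h
    · exfalso
      have hz : ∀ x : O, q x = 0 := by
        intro x
        have := hmul x 1
        rwa [mul_one, h, mul_zero] at this
      exact ha0 (hnd a fun y => by simp [QuadraticMap.polar, hz])
    · exact sub_eq_zero.mp h
  have ht1 : QuadraticMap.polar (⇑q) (1:O) 1 = 2 := by
    rw [QuadraticMap.polar_self, hq1]
    norm_num
  -- trace of a product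
  have tmul : ∀ x y : O, QuadraticMap.polar (⇑q) (x*y) 1 =
      QuadraticMap.polar (⇑q) x 1 * QuadraticMap.polar (⇑q) y 1 -
        QuadraticMap.polar (⇑q) x y := by
    intro x y
    have h := AdjL q hmul x y 1
    rwa [mul_one, QuadraticMap.polar_comm (⇑q) y x] at h
  -- κ is an involution
  have kk : ∀ x : O, k (k x) = x := by
    intro x
    simp only [hk, QuadraticMap.polar_sub_left, QuadraticMap.polar_smul_left, smul_eq_mul, ht1]
    module
  -- κ is an anti-homomorphism (item 2)
  have kanti : ∀ x y : O, k (x * y) = k y * k x := by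
    intro x y
    simp only [hk]
    rw [tmul x y]
    simp only [sub_mul, mul_sub, smul_mul_assoc, mul_smul_comm, one_mul, mul_one,
      smul_sub, smul_smul]
    have h7 := CHlin q hmul hnd x y
    linear_combination (norm := module) -h7
  have hka : k a = -a := by simp [hk, hta]
  have hkneg : ∀ x : O, k (-x) = -(k x) := by
    intro x
    simp only [hk, QuadraticMap.polar_neg_left, neg_smul]
    abel
  have hk0 : k 0 = 0 := by simp [hk]
  -- a ∈ aO
  obtain ⟨y₀, hy₀⟩ := exists_y0 q hmul hnd ha0 ha2
  have haA : a * (-(y₀ * a)) = a := by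
    rw [mul_neg, akey q hmul hnd ha0 ha2 ha2 y₀, hy₀, neg_smul, one_smul, neg_neg]
  have hamem : a ∈ LinearMap.range (LinearMap.mulLeft F a) := ⟨-(y₀ * a), haA⟩
  refine ⟨?_, ?_, aLax q hmul hnd ha0 ha2, ?_, ?_⟩
  -- Item 1 : κ(aO) = Oa
  · ext z
    simp only [Set.mem_image, SetLike.mem_coe, LinearMap.mem_range,
      LinearMap.mulLeft_apply, LinearMap.mulRight_apply]
    constructor
    · rintro ⟨x, ⟨u, rfl⟩, rfl⟩
      refine ⟨-(k u), ?_⟩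
      show -(k u) * a = k (a * u)
      rw [kanti a u, hka, mul_neg, neg_mul]
    · rintro ⟨x, rfl⟩
      refine ⟨a * (-(k x)), ⟨-(k x), rfl⟩, ?_⟩
      show k (a * (-(k x))) = x * a
      rw [kanti a (-(k x)), hkneg, kk, hka, neg_mul_neg]
  -- Item 2 : κ anti-automorphism
  · intro x y
    exact kanti x y
  -- Item 4 : no nonzero right annihilator in aO
  · intro b hb hb0
    by_contra hcon
    push_neg at hcon
    obtain ⟨c, rfl⟩ := hb
    have hab : a * (LinearMap.mulLeft F a c) = 0 := aLax q hmul hnd ha0 ha2 c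
    have hqb : q (LinearMap.mulLeft F a c) = 0 := by
      rw [LinearMap.mulLeft_apply, hmul, hqa, zero_mul]
    exact core q hmul hnd ha0 ha2 hb0 hab hqb
      (fun z => hcon (a * z) ⟨z, rfl⟩)
  -- Item 5 : no isomorphism
  · rintro ⟨e, he⟩
    have hzero : ∀ (y : O) (hy : y ∈ LinearMap.range (LinearMap.mulLeft F a)),
        (e ⟨a, hamem⟩ : O) * (e ⟨y, hy⟩ : O) = 0 := by
      intro y hy
      obtain ⟨z, hz⟩ := hy
      have hay : a * y = 0 := by
        rw [← hz, LinearMap.mulLeft_apply]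
        exact aLax q hmul hnd ha0 ha2 z
      have h0mem : a * y ∈ LinearMap.range (LinearMap.mulLeft F a) := by
        rw [hay]; exact zero_mem _
      have h := he a y hamem ⟨z, hz⟩ h0mem
      have h0 : (⟨a * y, h0mem⟩ : LinearMap.range (LinearMap.mulLeft F a)) = 0 :=
        Subtype.ext hay
      rw [h0, map_zero, ZeroMemClass.coe_zero] at h
      exact h.symm
    set c : O := (e ⟨a, hamem⟩ : O) with hc
    have hcB : c ∈ LinearMap.range (LinearMap.mulRight F a) := (e ⟨a, hamem⟩).2
    have hc0 : c ≠ 0 := by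
      intro h
      have h1 : e ⟨a, hamem⟩ = 0 := Subtype.ext h
      have h2 : (⟨a, hamem⟩ : LinearMap.range (LinearMap.mulLeft F a)) = 0 := by
        apply e.injective
        rw [h1, map_zero]
      exact ha0 (congrArg Subtype.val h2)
    have hcann : ∀ v ∈ LinearMap.range (LinearMap.mulRight F a), c * v = 0 := by
      intro v hv
      obtain ⟨w, hw⟩ := e.surjective ⟨v, hv⟩
      have h := hzero w.1 w.2
      rw [Subtype.coe_eta, hw] at h
      exact h
    obtain ⟨w', hw'⟩ := hcB
    rw [LinearMap.mulRight_apply] at hw'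
    -- b := κ(c)
    have hkc : k c = a * (-(k w')) := by
      rw [← hw', kanti w' a, hka, neg_mul, ← mul_neg]
    have hb0 : k c ≠ 0 := by
      intro h
      have := kk c
      rw [h, hk0] at this
      exact hc0 this.symm
    have hab : a * k c = 0 := by rw [hkc]; exact aLax q hmul hnd ha0 ha2 _
    have hqb : q (k c) = 0 := by rw [hkc, hmul, hqa, zero_mul]
    have H : ∀ z : O, (a*z) * (k c) = 0 := by
      intro z
      have hmem : (k z) * a ∈ LinearMap.range (LinearMap.mulRight F a) := ⟨k z, rfl⟩
      have h1 : k ((a*z) * (k c)) = 0 := by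
        rw [kanti (a*z) (k c), kk, kanti a z, hka, mul_neg, ← neg_mul]
        exact hcann _ ⟨-(k z), by rw [LinearMap.mulRight_apply]⟩
      have h2 := kk ((a*z) * (k c))
      rw [h1, hk0] at h2
      exact h2.symm
    exact core q hmul hnd ha0 ha2 hb0 hab hqb H
end

section
/- Let A be a subalgebra of an octonion algebra O containing an element e that is a two-sided identity for the multiplication of A, with e ∉ {0, 1}. Then tr(e) = 1, N(e) = 0 (so O is split), and A = F·e is one-dimensional. -/
/-- If a subalgebra `A` of an octonion algebra has a two-sided identity
element `e ∉ {0, 1}` for its multiplication, then `tr(e) = 1`, `N(e) = 0` (so `O` is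
split), and `A = F·e` is one-dimensional. -/
theorem stmt_13 (F : Type*) [Field F] (O : Type*) [NonAssocRing O] [Module F O]
    [SMulCommClass F O O] [IsScalarTower F O O]
    (q : QuadraticForm F O)
    (hmul : ∀ x y : O, q (x * y) = q x * q y)
    (hnd : ∀ x : O, (∀ y : O, QuadraticMap.polar (⇑q) x y = 0) → x = 0)
    (hdim : Module.finrank F O = 8)
    (A : Submodule F O)
    (hA : ∀ x ∈ A, ∀ y ∈ A, x * y ∈ A)
    (e : O) (heA : e ∈ A)
    (he : ∀ a ∈ A, e * a = a ∧ a * e = a)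
    (he0 : e ≠ 0) (he1 : e ≠ 1) :
    QuadraticMap.polar (⇑q) e 1 = 1 ∧ q e = 0 ∧
    (∃ x : O, x ≠ 0 ∧ q x = 0) ∧
    A = Submodule.span F {e} := by
  classical
  -- 1 ≠ 0 in O
  have h10 : (1 : O) ≠ 0 := by
    intro h
    have hsub : Subsingleton O := subsingleton_of_zero_eq_one h.symm
    rw [Module.finrank_zero_of_subsingleton] at hdim
    exact absurd hdim (by norm_num)
  -- polarization identities
  have pol1 : ∀ x y z : O, QuadraticMap.polar (⇑q) (x * y) (x * z)
      = q x * QuadraticMap.polar (⇑q) y z := by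
    intro x y z
    simp only [QuadraticMap.polar, ← mul_add, hmul]
    ring
  have pol2 : ∀ x y z : O, QuadraticMap.polar (⇑q) (x * z) (y * z)
      = QuadraticMap.polar (⇑q) x y * q z := by
    intro x y z
    simp only [QuadraticMap.polar, ← add_mul, hmul]
    ring
  have hqadd : ∀ x w : O, q (x + w) = q x + q w + QuadraticMap.polar (⇑q) x w := by
    intro x w
    simp only [QuadraticMap.polar]
    ring
  have pol3 : ∀ x y w z : O, QuadraticMap.polar (⇑q) (x * y) (w * z)
      + QuadraticMap.polar (⇑q) (w * y) (x * z)
      = QuadraticMap.polar (⇑q) x w * QuadraticMap.polar (⇑q) y z := by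
    intro x y w z
    have h := pol1 (x + w) y z
    rw [add_mul, add_mul, QuadraticMap.polar_add_left, QuadraticMap.polar_add_right,
      QuadraticMap.polar_add_right, hqadd] at h
    have hx := pol1 x y z
    have hw := pol1 w y z
    linear_combination h - hx - hw
  -- the key quadratic identity (y*x)*x = tr x • (y*x) - q x • y
  have K : ∀ x y : O, (y * x) * x
      = QuadraticMap.polar (⇑q) x 1 • (y * x) - q x • y := by
    intro x y
    have hz : ∀ z : O, QuadraticMap.polar (⇑q)
        ((y * x) * x - (QuadraticMap.polar (⇑q) x 1 • (y * x) - q x • y)) z = 0 := by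
      intro z
      rw [QuadraticMap.polar_sub_left, QuadraticMap.polar_sub_left,
        QuadraticMap.polar_smul_left, QuadraticMap.polar_smul_left]
      have h3 := pol3 (y * x) x z 1
      rw [mul_one, mul_one] at h3
      have h2 := pol2 z y x
      have hs := QuadraticMap.polar_comm (⇑q) z y
      simp only [smul_eq_mul]
      linear_combination h3 - h2 - q x * hs
    exact sub_eq_zero.mp (hnd _ hz)
  have Ksq : ∀ x : O, x * x = QuadraticMap.polar (⇑q) x 1 • x - q x • 1 := by
    intro x
    simpa using K x 1
  -- linearized square identity
  have K2 : ∀ x w : O, x * w + w * x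
      = QuadraticMap.polar (⇑q) x 1 • w + QuadraticMap.polar (⇑q) w 1 • x
        - QuadraticMap.polar (⇑q) x w • 1 := by
    intro x w
    have h := Ksq (x + w)
    rw [add_mul, mul_add, mul_add, QuadraticMap.polar_add_left, hqadd] at h
    have hx := Ksq x
    have hw := Ksq w
    linear_combination (norm := module) h - hx - hw
  have hee : e * e = e := (he e heA).1
  -- tr e = 1 and q e = 0
  have key : (QuadraticMap.polar (⇑q) e 1 - 1) • e = q e • 1 := by
    have h := Ksq e
    rw [hee] at h
    rw [sub_smul, one_smul]
    linear_combination (norm := module) -h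
  have hc : QuadraticMap.polar (⇑q) e 1 - 1 = 0 := by
    by_contra hc
    set c := QuadraticMap.polar (⇑q) e 1 - 1 with hcdef
    have hm : e = (c⁻¹ * q e) • 1 := by
      have : c⁻¹ • (c • e) = c⁻¹ • (q e • 1) := by rw [key]
      rwa [smul_smul, smul_smul, inv_mul_cancel₀ hc, one_smul] at this
    set m := c⁻¹ * q e with hmdef
    have hsq : (m * m - m) • (1 : O) = 0 := by
      have h2 : (m • (1:O)) * (m • (1:O)) = m • (1:O) := by rw [← hm]; exact hee
      rw [smul_mul_assoc, mul_smul_comm, one_mul, smul_smul] at h2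
      rw [sub_smul, h2, sub_self]
    have hm2 : m * m - m = 0 := by
      rcases smul_eq_zero.mp hsq with h | h
      · exact h
      · exact absurd h h10
    have : m = 0 ∨ m = 1 := by
      rcases mul_eq_zero.mp (by linear_combination hm2 : m * (m - 1) = 0) with h | h
      · exact Or.inl h
      · exact Or.inr (sub_eq_zero.mp h)
    rcases this with h | h
    · exact he0 (by rw [hm, h, zero_smul])
    · exact he1 (by rw [hm, h, one_smul])
  have htr : QuadraticMap.polar (⇑q) e 1 = 1 := sub_eq_zero.mp hc
  have hqe : q e = 0 := by
    rw [hc, zero_smul] at key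
    rcases smul_eq_zero.mp key.symm with h | h
    · exact h
    · exact absurd h h10
  -- every element of A is isotropic
  have qA : ∀ x ∈ A, q x = 0 := by
    intro x hx
    have : q (e * x) = q e * q x := hmul e x
    rw [(he x hx).1, hqe, zero_mul] at this
    exact this
  refine ⟨htr, hqe, ⟨e, he0, hqe⟩, ?_⟩
  apply le_antisymm
  · intro a ha
    have hBae : QuadraticMap.polar (⇑q) a e = 0 := by
      simp only [QuadraticMap.polar]
      rw [qA _ (A.add_mem ha heA), qA a ha, hqe]
      ring
    have h := K2 a e
    rw [(he a ha).2, (he a ha).1, htr, hBae] at h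
    have ha' : a = QuadraticMap.polar (⇑q) a 1 • e := by
      linear_combination (norm := module) h
    rw [Submodule.mem_span_singleton]
    exact ⟨QuadraticMap.polar (⇑q) a 1, ha'.symm⟩
  · exact Submodule.span_le.mpr (Set.singleton_subset_iff.mpr heA)
end

section
/- Let O be an octonion algebra over F and A a subalgebra of O containing 1 on which the polar form restricts nontrivially. Let R = A ∩ A^⊥ be the radical of the restricted polar form. Then AR ⊆ R and RA ⊆ R, and every element of R has norm 0. -/
/-- Let `A` be a subalgebra of an octonion algebra containing `1`
(hence closed under the standard involution) on which the polar form does not vanish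
identically, and let `R = A ∩ A^⊥` be the radical of the restricted polar form. Then
`AR ⊆ R`, `RA ⊆ R`, and every element of `R` has norm 0. -/
theorem stmt_14 (F : Type*) [Field F] (O : Type*) [NonAssocRing O] [Module F O]
    [SMulCommClass F O O] [IsScalarTower F O O]
    (q : QuadraticForm F O)
    (hmul : ∀ x y : O, q (x * y) = q x * q y)
    (hnd : ∀ x : O, (∀ y : O, QuadraticMap.polar (⇑q) x y = 0) → x = 0)
    (hdim : Module.finrank F O = 8)
    (A : Submodule F O)
    (hA : ∀ x ∈ A, ∀ y ∈ A, x * y ∈ A)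
    (h1 : (1 : O) ∈ A)
    (hAconj : ∀ x ∈ A, QuadraticMap.polar (⇑q) x 1 • (1 : O) - x ∈ A)
    (hpolar : ∃ a ∈ A, ∃ b ∈ A, QuadraticMap.polar (⇑q) a b ≠ 0) :
    (∀ a ∈ A, ∀ x : O, (x ∈ A ∧ ∀ c ∈ A, QuadraticMap.polar (⇑q) x c = 0) →
      (a * x ∈ A ∧ ∀ c ∈ A, QuadraticMap.polar (⇑q) (a * x) c = 0) ∧
      (x * a ∈ A ∧ ∀ c ∈ A, QuadraticMap.polar (⇑q) (x * a) c = 0)) ∧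
    (∀ x : O, (x ∈ A ∧ ∀ c ∈ A, QuadraticMap.polar (⇑q) x c = 0) → q x = 0) := by
  -- Key identity (1): polar (x*y) (x*z) = q x * polar y z
  have id1 : ∀ x y z : O,
      QuadraticMap.polar (⇑q) (x * y) (x * z) = q x * QuadraticMap.polar (⇑q) y z := by
    intro x y z
    have h : x * y + x * z = x * (y + z) := (mul_add x y z).symm
    simp only [QuadraticMap.polar, h, hmul]
    ring
  -- Key identity (3): polar (x*y) (z*w) + polar (z*y) (x*w) = polar x z * polar y w
  have id3 : ∀ x y z w : O,
      QuadraticMap.polar (⇑q) (x * y) (z * w) + QuadraticMap.polar (⇑q) (z * y) (x * w)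
        = QuadraticMap.polar (⇑q) x z * QuadraticMap.polar (⇑q) y w := by
    intro x y z w
    have h := id1 (x + z) y w
    rw [add_mul, add_mul, QuadraticMap.polar_add_left, QuadraticMap.polar_add_right,
      QuadraticMap.polar_add_right] at h
    have hq : q (x + z) = q x + q z + QuadraticMap.polar (⇑q) x z := by
      simp only [QuadraticMap.polar]; ring
    rw [id1, id1, hq] at h
    linear_combination h
  have main : ∀ a ∈ A, ∀ x : O, (x ∈ A ∧ ∀ c ∈ A, QuadraticMap.polar (⇑q) x c = 0) →
      (a * x ∈ A ∧ ∀ c ∈ A, QuadraticMap.polar (⇑q) (a * x) c = 0) ∧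
      (x * a ∈ A ∧ ∀ c ∈ A, QuadraticMap.polar (⇑q) (x * a) c = 0) := by
    intro a ha x hx
    obtain ⟨hxA, hxR⟩ := hx
    refine ⟨⟨hA a ha x hxA, ?_⟩, ⟨hA x hxA a ha, ?_⟩⟩
    · intro c hc
      have h := id3 a x 1 c
      rw [one_mul, one_mul] at h
      have h1' : QuadraticMap.polar (⇑q) x (a * c) = 0 := hxR _ (hA a ha c hc)
      have h2' : QuadraticMap.polar (⇑q) x c = 0 := hxR c hc
      rw [h1', h2'] at h; simpa using h
    · intro c hc
      have h := id3 x a c 1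
      rw [mul_one, mul_one] at h
      have h1' : QuadraticMap.polar (⇑q) (c * a) x = 0 := by
        rw [QuadraticMap.polar_comm]; exact hxR _ (hA c hc a ha)
      have h2' : QuadraticMap.polar (⇑q) x c = 0 := hxR c hc
      rw [h1', h2'] at h; simpa using h
  refine ⟨main, ?_⟩
  intro x hx
  obtain ⟨a, ha, b, hb, hab⟩ := hpolar
  have hxa := (main a ha x hx).2.2
  have h := id1 x a b
  rw [hxa _ (hA x hx.1 b hb)] at h
  exact (mul_eq_zero.mp h.symm).resolve_right hab
end

section
/- Let O be an octonion algebra over F with char F ≠ 2, and A a subalgebra with dim_F A > 4. Then A contains a 2-dimensional subalgebra B with 1 ∈ B such that the polar form of the norm restricted to B is nondegenerate (i.e., B is a 2-dimensional composition subalgebra). -/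
/-!
A subspace `W` on which `q` vanishes lies in its own orthogonal, and so does `W ⊕ U` for any
`U ⊥ W`; nondegeneracy then bounds `dim U + 2 dim W ≤ 8`. With `U = 0` this gives `a ∈ A` with
`q a ≠ 0`, and the Cayley–Hamilton identity `x² = polar(x, 1) x - q(x) 1` puts
`1 = q(a)⁻¹ (polar(a, 1) a - a²)` in `A`. With `U = F 1` and `W = A ∩ 1^⊥`, of dimension `≥ 4`,
it gives `t ∈ A ∩ 1^⊥` with `q t ≠ 0`. Then `t² = -q(t) 1`, so `span {1, t}` is a subalgebra, and
`1, t` is an orthogonal basis of it with `polar(1, 1) = 2` and `polar(t, t) = 2 q(t)` nonzero.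
-/

open Module Submodule

namespace LinearMap.BilinForm

variable {K V : Type*} [Field K] [AddCommGroup V] [Module K V] {B : LinearMap.BilinForm K V}

theorem linearIndependent_pair_of_isOrtho {x y : V} (hxy : B x y = 0) (hyx : B y x = 0)
    (hx : B x x ≠ 0) (hy : B y y ≠ 0) : LinearIndependent K ![x, y] := by
  refine linearIndependent_of_iIsOrtho (B := B) (fun i j hij => ?_) (fun i => ?_)
  · fin_cases i <;> fin_cases j <;> simp_all [Function.onFun]
  · fin_cases i <;> simpa

theorem finrank_span_pair_of_isOrtho {x y : V} (hxy : B x y = 0) (hyx : B y x = 0)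
    (hx : B x x ≠ 0) (hy : B y y ≠ 0) : finrank K (span K {x, y}) = 2 := by
  have h := finrank_span_eq_card (linearIndependent_pair_of_isOrtho hxy hyx hx hy)
  rwa [Matrix.range_cons, Matrix.range_cons, Matrix.range_empty, Set.union_empty,
    Set.singleton_union, Fintype.card_fin] at h

theorem eq_zero_of_mem_span_pair_of_isOrtho {x y z : V} (hxy : B x y = 0) (hyx : B y x = 0)
    (hx : B x x ≠ 0) (hy : B y y ≠ 0) (hz : z ∈ span K {x, y}) (hzx : B z x = 0)
    (hzy : B z y = 0) : z = 0 := by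
  obtain ⟨a, b, rfl⟩ := mem_span_pair.mp hz
  simp only [map_add, map_smul, LinearMap.add_apply, LinearMap.smul_apply, smul_eq_mul, hxy, hyx,
    mul_zero, add_zero, zero_add, mul_eq_zero, hx, hy, or_false] at hzx hzy
  simp [hzx, hzy]

variable [FiniteDimensional K V]

theorem finrank_add_finrank_le_of_le_orthogonal (hB : B.Nondegenerate) {U W : Submodule K V}
    (h : U ≤ B.orthogonal W) : finrank K U + finrank K W ≤ finrank K V := by
  have hU := Submodule.finrank_mono h
  rw [finrank_orthogonal hB] at hU
  have hW := W.finrank_le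
  omega

theorem finrank_le_finrank_inf_orthogonal_span_singleton_add_one (W : Submodule K V) (v : V) :
    finrank K W ≤ finrank K ↥(W ⊓ B.orthogonal (K ∙ v)) + 1 := by
  have h₁ := finrank_sup_add_finrank_inf_eq W (B.orthogonal (K ∙ v))
  have h₂ := (W ⊔ B.orthogonal (K ∙ v)).finrank_le
  have h₃ := finrank_add_finrank_orthogonal' (B := B) (K ∙ v)
  have h₄ : finrank K (K ∙ v) ≤ 1 := by simpa using finrank_span_le_card ({v} : Set V)
  omega

end LinearMap.BilinForm

namespace QuadraticMap

open LinearMap.BilinForm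

section

variable {K V : Type*} [Field K] [AddCommGroup V] [Module K V]

theorem isRefl_polarBilin (Q : QuadraticForm K V) : Q.polarBilin.IsRefl := fun x y h => by
  rwa [polarBilin_apply_apply, polar_comm, ← polarBilin_apply_apply]

theorem exists_mem_apply_ne_zero_of_finrank_lt [FiniteDimensional K V] {Q : QuadraticForm K V}
    (hQ : Q.polarBilin.Nondegenerate) {U W : Submodule K V}
    (hWU : W ≤ orthogonal Q.polarBilin U) (hUW : Disjoint U W)
    (h : finrank K V < finrank K U + 2 * finrank K W) : ∃ w ∈ W, Q w ≠ 0 := by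
  by_contra! hW
  have hWW : W ≤ orthogonal Q.polarBilin W := fun x hx y hy => by
    rw [polarBilin_apply_apply, polar, hW _ hx, hW _ hy, hW _ (add_mem hy hx), sub_zero, sub_zero]
  have hUW' : U ≤ orthogonal Q.polarBilin W :=
    (LinearMap.BilinForm.le_orthogonal_orthogonal (isRefl_polarBilin Q)).trans
      (LinearMap.BilinForm.orthogonal_le hWU)
  have hsup := finrank_add_finrank_le_of_le_orthogonal hQ (sup_le hUW' hWW)
  have hinf := Submodule.finrank_sup_add_finrank_inf_eq U W
  rw [hUW.eq_bot, finrank_bot] at hinf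
  omega

end

section

variable {F O : Type*} [Field F] [NonAssocRing O] [Module F O] {q : QuadraticForm F O}

theorem polar_mul_mul_left (hmul : ∀ x y : O, q (x * y) = q x * q y) (x y z : O) :
    polar q (x * y) (x * z) = q x * polar q y z := by
  simp only [polar, ← mul_add, hmul]
  ring

theorem polar_mul_add_polar_mul (hmul : ∀ x y : O, q (x * y) = q x * q y) (x w y z : O) :
    polar q (x * y) (w * z) + polar q (w * y) (x * z) = polar q x w * polar q y z := by
  have h := polar_mul_mul_left hmul (x + w) y z
  simp only [add_mul, polar_add_left, polar_add_right, polar_mul_mul_left hmul] at h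
  have hxw : q (x + w) = q x + q w + polar q x w := by rw [polar]; ring
  linear_combination h + polar q y z * hxw

theorem apply_one_eq_one [Nontrivial O] (hmul : ∀ x y : O, q (x * y) = q x * q y)
    (hq : q.polarBilin.SeparatingLeft) : q 1 = 1 := by
  have h : q 1 * (q 1 - 1) = 0 := by
    linear_combination -(by simpa using hmul 1 1 : q 1 = q 1 * q 1)
  refine (mul_eq_zero.mp h).elim (fun h₀ => ?_) sub_eq_zero.mp
  have hzero : ∀ x, q x = 0 := fun x => by rw [← one_mul x, hmul, h₀, zero_mul]
  exact absurd (hq 1 fun y => by simp only [polarBilin_apply_apply, polar, hzero, sub_zero])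
    one_ne_zero

theorem mul_self_eq_polar_smul_sub_smul_one (hmul : ∀ x y : O, q (x * y) = q x * q y)
    (hq : q.polarBilin.SeparatingLeft) (x : O) : x * x = polar q x 1 • x - q x • (1 : O) := by
  refine sub_eq_zero.mp (hq _ fun z => ?_)
  have h₁ := polar_mul_add_polar_mul hmul x 1 x z
  have h₂ := polar_mul_mul_left hmul x 1 z
  simp only [one_mul, mul_one] at h₁ h₂
  simp only [polarBilin_apply_apply, polar_sub_left, polar_smul_left, smul_eq_mul]
  linear_combination h₁ - h₂

theorem one_mem_of_apply_ne_zero (hmul : ∀ x y : O, q (x * y) = q x * q y)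
    (hq : q.polarBilin.SeparatingLeft) {A : Submodule F O}
    (hA : ∀ x ∈ A, ∀ y ∈ A, x * y ∈ A) {a : O} (ha : a ∈ A) (hqa : q a ≠ 0) : (1 : O) ∈ A := by
  have h : (1 : O) = (q a)⁻¹ • (polar q a 1 • a - a * a) := by
    rw [mul_self_eq_polar_smul_sub_smul_one hmul hq a, sub_sub_cancel, smul_smul,
      inv_mul_cancel₀ hqa, one_smul]
  rw [h]
  exact A.smul_mem _ (A.sub_mem (A.smul_mem _ ha) (hA a ha a ha))

end

end QuadraticMap

theorem Submodule.mul_mem_span_one_pair {F O : Type*} [Field F] [NonAssocRing O] [Module F O]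
    [SMulCommClass F O O] [IsScalarTower F O O] {t : O} (ht : t * t ∈ span F {1, t}) :
    ∀ x ∈ span F {(1 : O), t}, ∀ y ∈ span F {1, t}, x * y ∈ span F {1, t} := by
  intro x hx y hy
  obtain ⟨a, b, rfl⟩ := mem_span_pair.mp hx
  obtain ⟨c, d, rfl⟩ := mem_span_pair.mp hy
  have h₁ : (1 : O) ∈ span F {1, t} := subset_span (by simp)
  have h₂ : t ∈ span F {1, t} := subset_span (by simp)
  simp only [add_mul, mul_add, smul_mul_assoc, mul_smul_comm, one_mul, mul_one]
  exact add_mem (smul_mem _ _ (add_mem (smul_mem _ _ h₁) (smul_mem _ _ h₂)))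
    (smul_mem _ _ (add_mem (smul_mem _ _ h₂) (smul_mem _ _ ht)))

open QuadraticMap LinearMap.BilinForm in
/-- If `char F ≠ 2` and `A` is a subalgebra of an octonion algebra with
`dim A > 4`, then `A` contains a 2-dimensional composition subalgebra `B` with `1 ∈ B`
on which the polar form is nondegenerate. -/
theorem stmt_18 (F : Type*) [Field F] (O : Type*) [NonAssocRing O] [Module F O]
    [SMulCommClass F O O] [IsScalarTower F O O]
    (q : QuadraticForm F O)
    (hmul : ∀ x y : O, q (x * y) = q x * q y)
    (hnd : ∀ x : O, (∀ y : O, QuadraticMap.polar (⇑q) x y = 0) → x = 0)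
    (hdim : Module.finrank F O = 8)
    (hchar : (2 : F) ≠ 0)
    (A : Submodule F O)
    (hA : ∀ x ∈ A, ∀ y ∈ A, x * y ∈ A)
    (hAdim : 4 < Module.finrank F A) :
    ∃ B : Submodule F O,
      B ≤ A ∧ (1 : O) ∈ B ∧
      Module.finrank F B = 2 ∧
      (∀ x ∈ B, ∀ y ∈ B, x * y ∈ B) ∧
      (∀ x ∈ B, (∀ y ∈ B, QuadraticMap.polar (⇑q) x y = 0) → x = 0) := by
  have hsep : q.polarBilin.SeparatingLeft := hnd
  have hB : q.polarBilin.Nondegenerate :=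
    (isRefl_polarBilin q).nondegenerate_iff_separatingLeft.mpr hsep
  have : FiniteDimensional F O := .of_finrank_pos (by omega)
  have : Nontrivial O := Module.nontrivial_of_finrank_pos (R := F) (by omega)
  have h11 : polar q 1 1 ≠ 0 := by
    rwa [polar_self, apply_one_eq_one hmul hsep, nsmul_one, Nat.cast_ofNat]
  obtain ⟨a, haA, hqa⟩ := exists_mem_apply_ne_zero_of_finrank_lt hB (U := ⊥) (W := A)
    (by simp) disjoint_bot_left (by simp; omega)
  have h1A : (1 : O) ∈ A := one_mem_of_apply_ne_zero hmul hsep hA haA hqa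
  obtain ⟨t, ⟨htA, ht⟩, hqt⟩ := exists_mem_apply_ne_zero_of_finrank_lt hB (U := F ∙ 1)
    (W := A ⊓ orthogonal q.polarBilin (F ∙ 1)) inf_le_right
    ((disjoint_iff.mpr (span_singleton_inf_orthogonal_eq_bot h11)).mono_right inf_le_right)
    (by
      have := finrank_le_finrank_inf_orthogonal_span_singleton_add_one (B := q.polarBilin) A 1
      rw [finrank_span_singleton one_ne_zero]
      omega)
  have h1t : polar q 1 t = 0 := ht 1 (mem_span_singleton_self 1)
  have ht1 : polar q t 1 = 0 := by rwa [polar_comm]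
  have htt : polar q t t ≠ 0 := by
    rw [polar_self, nsmul_eq_mul, Nat.cast_ofNat]; exact mul_ne_zero hchar hqt
  have h1B : (1 : O) ∈ span F {1, t} := subset_span (by simp)
  have htB : t ∈ span F {1, t} := subset_span (by simp)
  refine ⟨span F {1, t}, span_le.mpr (by simp [Set.insert_subset_iff, h1A, htA]), h1B,
    finrank_span_pair_of_isOrtho (B := q.polarBilin) h1t ht1 h11 htt,
    mul_mem_span_one_pair ?_, fun x hx hxB =>
      eq_zero_of_mem_span_pair_of_isOrtho (B := q.polarBilin) h1t ht1 h11 htt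
        hx (hxB 1 h1B) (hxB t htB)⟩
  rw [mul_self_eq_polar_smul_sub_smul_one hmul hsep, ht1, zero_smul, zero_sub]
  exact neg_mem (smul_mem _ _ h1B)
end
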